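/- arXiv:2510.11411 — 14 statements merged into one kernel-verified Lean document; each statement's English description precedes it below -/
import Mathlib

section
/- For all real t ≥ 0, (1 + t²/3)·tanh(t) ≥ t. -/
open Real Set

lemma sinh_le_mul_cosh (t : ℝ) (ht : 0 ≤ t) : Real.sinh t ≤ t * Real.cosh t := by
  have hmono : MonotoneOn (fun x : ℝ => x * Real.cosh x - Real.sinh x) (Ici 0) := by
    apply monotoneOn_of_deriv_nonneg (convex_Ici 0)
    · fun_prop
    · exact (differentiable_id.mul Real.differentiable_cosh).sub
        Real.differentiable_sinh |>.differentiableOn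
    · intro x hx
      rw [interior_Ici] at hx
      have hd : HasDerivAt (fun x : ℝ => x * Real.cosh x - Real.sinh x)
          (1 * Real.cosh x + x * Real.sinh x - Real.cosh x) x :=
        ((hasDerivAt_id' x).mul (Real.hasDerivAt_cosh x)).sub (Real.hasDerivAt_sinh x)
      rw [hd.deriv]
      have hx' : (0:ℝ) < x := hx
      have : 0 < Real.sinh x := Real.sinh_pos_iff.mpr hx'
      nlinarith
  have h := hmono (self_mem_Ici) (show t ∈ Ici (0:ℝ) from ht) ht
  simp only [Real.sinh_zero, Real.cosh_zero] at h
  linarith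

lemma key (t : ℝ) (ht : 0 ≤ t) :
    t * Real.cosh t ≤ (1 + t ^ 2 / 3) * Real.sinh t := by
  have hmono : MonotoneOn (fun x : ℝ => (1 + x ^ 2 / 3) * Real.sinh x - x * Real.cosh x)
      (Ici 0) := by
    apply monotoneOn_of_deriv_nonneg (convex_Ici 0)
    · fun_prop
    · exact (((differentiable_const _).add ((differentiable_id.pow 2).div_const 3)).mul
        Real.differentiable_sinh).sub (differentiable_id.mul Real.differentiable_cosh)
        |>.differentiableOn
    · intro x hx
      rw [interior_Ici] at hx
      have hd : HasDerivAt (fun x : ℝ => (1 + x ^ 2 / 3) * Real.sinh x - x * Real.cosh x)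
          ((0 + 2 * x ^ 1 * 1 / 3) * Real.sinh x + (1 + x ^ 2 / 3) * Real.cosh x -
            (1 * Real.cosh x + x * Real.sinh x)) x := by
        exact (((hasDerivAt_const x (1:ℝ)).add (((hasDerivAt_id' x).pow 2).div_const 3)).mul
          (Real.hasDerivAt_sinh x)).sub ((hasDerivAt_id' x).mul (Real.hasDerivAt_cosh x))
      rw [hd.deriv]
      have h1 := sinh_le_mul_cosh x (le_of_lt hx)
      nlinarith [mul_nonneg (le_of_lt hx) (sub_nonneg.mpr h1)]
  have h := hmono (self_mem_Ici) (show t ∈ Ici (0:ℝ) from ht) ht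
  simp only [Real.sinh_zero, Real.cosh_zero] at h
  linarith

theorem tanh_lower_bound (t : ℝ) (ht : 0 ≤ t) :
    (1 + t ^ 2 / 3) * Real.tanh t ≥ t := by
  have hc : 0 < Real.cosh t := Real.cosh_pos t
  rw [Real.tanh_eq_sinh_div_cosh, ge_iff_le, mul_div_assoc', le_div_iff₀ hc]
  exact key t ht
end

section
/- For every real p with 0 < p < π/2 satisfying 2p·tan(p) ≥ 1, and every real u, tan(p·√(1+u²)) ≥ tan(p) + (p/(2·cos²(p)))·u², provided p·√(1+u²) < π/2. -/
/-!
Put `t = p √(1 + u²)`, so that `p u² = (t² - p²) / p`. It suffices that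
`x ↦ tan x - x² / (2 p cos² p)` is monotone on `[p, π/2)`, i.e. that `x cos² x ≤ p cos² p` there.
The derivative of `x cos² x` is `cos x (cos x - 2 x sin x)`, and the hypothesis `2 p tan p ≥ 1`
propagates along `[p, π/2)` because `x sin x` increases while `cos x` decreases.
-/

open Real Set

lemma antitoneOn_mul_cos_sq {p : ℝ} (hp0 : 0 < p) (h : cos p ≤ 2 * p * sin p) :
    AntitoneOn (fun x => x * cos x ^ 2) (Icc p (π / 2)) := by
  refine antitoneOn_of_hasDerivWithinAt_nonpos (f' := fun x => cos x * (cos x - 2 * x * sin x))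
    (convex_Icc _ _) (by fun_prop) (fun x _ => ?_) (fun x hx => ?_)
  · exact (((hasDerivAt_id' x).mul ((hasDerivAt_cos x).fun_pow 2)).congr_deriv (by ring))
      |>.hasDerivWithinAt
  · obtain ⟨hpx, hx_lt⟩ : x ∈ Ioo p (π / 2) := by rwa [interior_Icc] at hx
    have hcos_nonneg : 0 ≤ cos x := cos_nonneg_of_mem_Icc ⟨by linarith [pi_pos], hx_lt.le⟩
    have hcos_le : cos x ≤ cos p :=
      cos_le_cos_of_nonneg_of_le_pi hp0.le (by linarith [pi_pos]) hpx.le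
    have hsin_le : sin p ≤ sin x :=
      sin_le_sin_of_le_of_le_pi_div_two (by linarith [pi_pos]) hx_lt.le hpx.le
    have hsin_nonneg : 0 ≤ sin p := sin_nonneg_of_nonneg_of_le_pi hp0.le (by linarith [pi_pos])
    have hmul_le : p * sin p ≤ x * sin x := mul_le_mul hpx.le hsin_le hsin_nonneg (by linarith)
    exact mul_nonpos_of_nonneg_of_nonpos hcos_nonneg (by linarith)

lemma monotoneOn_tan_sub_sq_div {p : ℝ} (hp0 : 0 < p) (h : cos p ≤ 2 * p * sin p) :
    MonotoneOn (fun x => tan x - x ^ 2 / (2 * p * cos p ^ 2)) (Ico p (π / 2)) := by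
  have hderiv : ∀ x ∈ Ico p (π / 2), HasDerivAt (fun x => tan x - x ^ 2 / (2 * p * cos p ^ 2))
      (1 / cos x ^ 2 - x / (p * cos p ^ 2)) x := fun x hx => by
    have hcos : cos x ≠ 0 := (cos_pos_of_mem_Ioo ⟨by linarith [pi_pos, hx.1], hx.2⟩).ne'
    exact ((hasDerivAt_tan hcos).sub ((hasDerivAt_pow 2 x).div_const _)).congr_deriv
      (by field_simp; ring)
  refine monotoneOn_of_hasDerivWithinAt_nonneg (convex_Ico _ _)
    (fun x hx => (hderiv x hx).continuousAt.continuousWithinAt)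
    (fun x hx => (hderiv x (interior_subset hx)).hasDerivWithinAt) (fun x hx => ?_)
  obtain ⟨hpx, hx_lt⟩ : x ∈ Ioo p (π / 2) := by rwa [interior_Ico] at hx
  have hcos_x : 0 < cos x := cos_pos_of_mem_Ioo ⟨by linarith [pi_pos], hx_lt⟩
  have hcos_p : 0 < cos p := cos_pos_of_mem_Ioo ⟨by linarith [pi_pos], by linarith⟩
  have hanti : x * cos x ^ 2 ≤ p * cos p ^ 2 :=
    antitoneOn_mul_cos_sq hp0 h ⟨le_rfl, by linarith⟩ ⟨hpx.le, hx_lt.le⟩ hpx.le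
  rw [sub_nonneg, div_le_div_iff₀ (by positivity) (by positivity)]
  linarith

theorem tan_sqrt_one_add_sq_bound (p u : ℝ)
    (hp0 : 0 < p) (hp : p < π / 2)
    (hptan : 2 * p * tan p ≥ 1)
    (hrange : p * Real.sqrt (1 + u ^ 2) < π / 2) :
    tan (p * Real.sqrt (1 + u ^ 2)) ≥ tan p + (p / (2 * cos p ^ 2)) * u ^ 2 := by
  have hcos_p : 0 < cos p := cos_pos_of_mem_Ioo ⟨by linarith [pi_pos], hp⟩
  have hcos_le : cos p ≤ 2 * p * sin p := by
    rw [tan_eq_sin_div_cos, ge_iff_le, ← mul_div_assoc, le_div_iff₀ hcos_p] at hptan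
    linarith
  set s := Real.sqrt (1 + u ^ 2)
  have hs_sq : s ^ 2 = 1 + u ^ 2 := sq_sqrt (by positivity)
  have hps : p ≤ p * s :=
    le_mul_of_one_le_right hp0.le (one_le_sqrt.mpr (le_add_of_nonneg_right (sq_nonneg u)))
  have hmono := monotoneOn_tan_sub_sq_div hp0 hcos_le ⟨le_rfl, hp⟩ ⟨hps, hrange⟩ hps
  have hsq : (p * s) ^ 2 / (2 * p * cos p ^ 2) - p ^ 2 / (2 * p * cos p ^ 2)
      = p / (2 * cos p ^ 2) * u ^ 2 := by
    rw [mul_pow, hs_sq]; field_simp; ring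
  simp only at hmono
  linarith
end

section
/- Define g(x,y) = (cosh(x) − cos(y))/(x² + y²) for (x,y) ≠ (0,0). For every fixed real y, the function x ↦ g(x,y) is monotonically decreasing on (−∞, 0) and monotonically increasing on (0, ∞). -/
/-! Write `φ x = (cosh x - 1) / x ^ 2` and `ψ y = (1 - cos y) / y ^ 2`. Then
`g(x, y) = (x² φ x + y² ψ y) / (x² + y²) = ψ y + (φ x - ψ y) · x² / (x² + y²)`.
For `x > 0` the power series `φ x = ∑ x^(2n) / (2n+2)!` is increasing with
`φ x ≥ 1/2 ≥ ψ y`, and the weight `x² / (x² + y²)` is increasing and nonnegative, so `g(·, y)`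
increases on `(0, ∞)`; since `g` is even in `x`, it decreases on `(-∞, 0)`. -/

open Real Set

open Nat in
theorem Real.hasSum_cosh_sub_one_div_sq {x : ℝ} (hx : x ≠ 0) :
    HasSum (fun n : ℕ => x ^ (2 * n) / (2 * n + 2)!) ((cosh x - 1) / x ^ 2) := by
  have hsum : HasSum (fun n : ℕ => x ^ (2 * (n + 1)) / (2 * (n + 1))!) (cosh x - 1) := by
    simpa using (hasSum_nat_add_iff' 1).2 (hasSum_cosh x)
  refine (hsum.div_const (x ^ 2)).congr_fun fun n => ?_
  rw [mul_add, mul_one, pow_add]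
  field_simp

theorem Real.monotoneOn_cosh_sub_one_div_sq :
    MonotoneOn (fun x : ℝ => (cosh x - 1) / x ^ 2) (Ioi 0) := by
  intro a ha b hb hab
  refine hasSum_le (fun n => ?_) (hasSum_cosh_sub_one_div_sq (ne_of_gt ha))
    (hasSum_cosh_sub_one_div_sq (ne_of_gt hb))
  gcongr
  exact le_of_lt ha

theorem Real.one_half_le_cosh_sub_one_div_sq {x : ℝ} (hx : x ≠ 0) :
    1 / 2 ≤ (cosh x - 1) / x ^ 2 := by
  have hterm := le_hasSum (hasSum_cosh_sub_one_div_sq hx) 0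
    fun n _ => div_nonneg ((even_two_mul n).pow_nonneg x) (by positivity)
  simpa using hterm

theorem Real.one_sub_cos_div_sq_le_one_half (y : ℝ) : (1 - cos y) / y ^ 2 ≤ 1 / 2 := by
  rcases eq_or_ne y 0 with rfl | hy
  · norm_num
  rw [div_le_iff₀ (by positivity)]
  linarith [one_sub_sq_div_two_le_cos (x := y)]

theorem monotoneOn_sq_div_sq_add (c : ℝ) :
    MonotoneOn (fun x : ℝ => x ^ 2 / (x ^ 2 + c ^ 2)) (Ioi 0) := by
  intro a ha b hb hab
  have ha' : (0 : ℝ) < a := ha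
  have hb' : (0 : ℝ) < b := hb
  dsimp only
  rw [div_le_div_iff₀ (by positivity) (by positivity)]
  have : a ^ 2 ≤ b ^ 2 := by gcongr
  nlinarith [sq_nonneg c]

theorem cosh_sub_cos_div_sq_add_sq_eq {x : ℝ} (y : ℝ) (hx : x ≠ 0) :
    (cosh x - cos y) / (x ^ 2 + y ^ 2) = (1 - cos y) / y ^ 2 +
      ((cosh x - 1) / x ^ 2 - (1 - cos y) / y ^ 2) * (x ^ 2 / (x ^ 2 + y ^ 2)) := by
  rcases eq_or_ne y 0 with rfl | hy
  · field_simp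
    simp
  · field_simp
    ring

theorem g_monotone (y : ℝ) :
    AntitoneOn (fun x : ℝ => (Real.cosh x - Real.cos y) / (x ^ 2 + y ^ 2)) (Iio 0) ∧
    MonotoneOn (fun x : ℝ => (Real.cosh x - Real.cos y) / (x ^ 2 + y ^ 2)) (Ioi 0) := by
  have hgap : ∀ x ∈ Ioi (0 : ℝ), 0 ≤ (cosh x - 1) / x ^ 2 - (1 - cos y) / y ^ 2 :=
    fun x hx => sub_nonneg.2 ((one_sub_cos_div_sq_le_one_half y).trans
      (one_half_le_cosh_sub_one_div_sq (ne_of_gt hx)))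
  have hweight : ∀ x ∈ Ioi (0 : ℝ), 0 ≤ x ^ 2 / (x ^ 2 + y ^ 2) := fun x _ => by positivity
  have hmono : MonotoneOn (fun x : ℝ => (cosh x - cos y) / (x ^ 2 + y ^ 2)) (Ioi 0) := by
    refine MonotoneOn.congr ?_ fun x hx => (cosh_sub_cos_div_sq_add_sq_eq y (ne_of_gt hx)).symm
    exact ((monotoneOn_cosh_sub_one_div_sq.add_const _).mul (monotoneOn_sq_div_sq_add y)
      hgap hweight).const_add _
  refine ⟨fun a ha b hb hab => ?_, hmono⟩
  simpa [cosh_neg, neg_sq] using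
    hmono (mem_Ioi.2 (neg_pos.2 hb)) (mem_Ioi.2 (neg_pos.2 ha)) (neg_le_neg hab)
end

section
/- Let g̃(x,y) = 2x·cos(y) − 2x·cosh(x) + (x² + y²)·sinh(x). Then for every fixed real y, g̃(x,y) ≥ 0 for all x ≥ 0 and g̃(x,y) ≤ 0 for all x ≤ 0. -/
/-!
Bound `cos y ≥ 1 - y²/2`; what remains is `x (x sinh x - 2 (cosh x - 1)) + y² (sinh x - x)`, and
both brackets are nonnegative for `x ≥ 0`. The second is `sinh x ≥ x`; the first becomes
`sinh t ≤ t cosh t` for `t = x/2` by the double-angle formulas, and `t cosh t - sinh t` has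
derivative `t sinh t ≥ 0`. The expression is odd in `x`.
-/

namespace Real

lemma mul_sinh_nonneg (t : ℝ) : 0 ≤ t * sinh t := by
  rcases le_total 0 t with ht | ht
  · exact mul_nonneg ht (sinh_nonneg_iff.2 ht)
  · exact mul_nonneg_of_nonpos_of_nonpos ht (sinh_nonpos_iff.2 ht)

lemma monotone_mul_cosh_sub_sinh : Monotone fun t : ℝ => t * cosh t - sinh t := by
  refine monotone_of_hasDerivAt_nonneg (f' := fun t => t * sinh t) (fun t => ?_) mul_sinh_nonneg
  exact ((hasDerivAt_id' t).fun_mul (hasDerivAt_cosh t)).fun_sub (hasDerivAt_sinh t)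
    |>.congr_deriv (by ring)

lemma sinh_le_mul_cosh {t : ℝ} (ht : 0 ≤ t) : sinh t ≤ t * cosh t := by
  simpa using monotone_mul_cosh_sub_sinh ht

lemma mul_cosh_le_sinh {t : ℝ} (ht : t ≤ 0) : t * cosh t ≤ sinh t := by
  simpa using monotone_mul_cosh_sub_sinh ht

lemma two_mul_cosh_sub_one_le_mul_sinh (x : ℝ) : 2 * (cosh x - 1) ≤ x * sinh x := by
  obtain ⟨t, rfl⟩ : ∃ t, x = 2 * t := ⟨x / 2, by ring⟩
  have key : sinh t ^ 2 ≤ t * sinh t * cosh t := by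
    rcases le_total 0 t with ht | ht
    · nlinarith [sinh_le_mul_cosh ht, sinh_nonneg_iff.2 ht]
    · nlinarith [mul_cosh_le_sinh ht, sinh_nonpos_iff.2 ht]
  rw [cosh_two_mul, sinh_two_mul, cosh_sq]
  linarith

end Real

open Real

lemma gtilde_nonneg (y : ℝ) {x : ℝ} (hx : 0 ≤ x) :
    0 ≤ 2 * x * cos y - 2 * x * cosh x + (x ^ 2 + y ^ 2) * sinh x := by
  have hcos : 2 * x * (1 - y ^ 2 / 2) ≤ 2 * x * cos y :=
    mul_le_mul_of_nonneg_left one_sub_sq_div_two_le_cos (by positivity)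
  have hcosh : 0 ≤ x * (x * sinh x - 2 * (cosh x - 1)) :=
    mul_nonneg hx (sub_nonneg.2 (two_mul_cosh_sub_one_le_mul_sinh x))
  have hsinh : 0 ≤ y ^ 2 * (sinh x - x) :=
    mul_nonneg (sq_nonneg y) (sub_nonneg.2 (self_le_sinh_iff.2 hx))
  linarith

theorem gtilde_sign (y : ℝ) :
    (∀ x : ℝ, 0 ≤ x →
      0 ≤ 2 * x * Real.cos y - 2 * x * Real.cosh x + (x ^ 2 + y ^ 2) * Real.sinh x) ∧
    (∀ x : ℝ, x ≤ 0 →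
      2 * x * Real.cos y - 2 * x * Real.cosh x + (x ^ 2 + y ^ 2) * Real.sinh x ≤ 0) := by
  refine ⟨fun x hx => gtilde_nonneg y hx, fun x hx => ?_⟩
  have h := gtilde_nonneg y (neg_nonneg.2 hx)
  rw [cosh_neg, sinh_neg, neg_sq] at h
  linarith
end

section
/- For every real y, the function g̃(x,y) = 2x·cos(y) − 2x·cosh(x) + (x² + y²)·sinh(x) is monotonically increasing in x on all of ℝ. -/
/-!
The x-derivative of g̃ is `2 cos y + (x² + y² - 2) cosh x`, whose own derivative
`2x cosh x + (x² + y² - 2) sinh x` vanishes at `0` and is nondecreasing, its derivative being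
`(x² + y²) cosh x + 4x sinh x ≥ 0`. Hence the x-derivative of g̃ is minimal at `x = 0`, where it
equals `2 cos y + y² - 2 ≥ 0` because `cos y ≥ 1 - y²/2`.
-/

open Real

lemma le_apply_of_hasDerivAt_of_monotone {f f' : ℝ → ℝ} (hf : ∀ x, HasDerivAt f (f' x) x)
    (hf' : Monotone f') {a : ℝ} (ha : f' a = 0) (x : ℝ) : f a ≤ f x := by
  have hcont : Continuous f := continuous_iff_continuousAt.2 fun x => (hf x).continuousAt
  rcases lt_trichotomy x a with hxa | rfl | hax
  · obtain ⟨c, hc, hslope⟩ :=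
      exists_hasDerivAt_eq_slope f f' hxa hcont.continuousOn fun c _ => hf c
    rw [eq_div_iff (sub_ne_zero.2 hxa.ne')] at hslope
    nlinarith [hf' hc.2.le]
  · rfl
  · obtain ⟨c, hc, hslope⟩ :=
      exists_hasDerivAt_eq_slope f f' hax hcont.continuousOn fun c _ => hf c
    rw [eq_div_iff (sub_ne_zero.2 hax.ne')] at hslope
    nlinarith [hf' hc.1.le]

lemma Real.mul_sinh_nonneg_s4 (x : ℝ) : 0 ≤ x * sinh x := by
  rcases le_total 0 x with hx | hx
  · exact mul_nonneg hx (sinh_nonneg_iff.2 hx)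
  · exact mul_nonneg_of_nonpos_of_nonpos hx (sinh_nonpos_iff.2 hx)

lemma two_mul_cos_add_sq_sub_two_nonneg (y : ℝ) : 0 ≤ 2 * cos y + y ^ 2 - 2 := by
  linarith [one_sub_sq_div_two_le_cos (x := y)]

section

variable (y x : ℝ)

lemma hasDerivAt_gtilde :
    HasDerivAt (fun x => 2 * x * cos y - 2 * x * cosh x + (x ^ 2 + y ^ 2) * sinh x)
      (2 * cos y + (x ^ 2 + y ^ 2 - 2) * cosh x) x := by
  have := ((((hasDerivAt_id' x).const_mul 2).mul_const (cos y)).fun_sub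
    (((hasDerivAt_id' x).const_mul 2).fun_mul (hasDerivAt_cosh x))).fun_add
    (((hasDerivAt_pow 2 x).add_const (y ^ 2)).fun_mul (hasDerivAt_sinh x))
  exact this.congr_deriv (by push_cast; ring)

lemma hasDerivAt_gtilde_deriv :
    HasDerivAt (fun x => 2 * cos y + (x ^ 2 + y ^ 2 - 2) * cosh x)
      (2 * x * cosh x + (x ^ 2 + y ^ 2 - 2) * sinh x) x := by
  have := ((((hasDerivAt_pow 2 x).add_const (y ^ 2)).sub_const 2).fun_mul
    (hasDerivAt_cosh x)).const_add (2 * cos y)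
  exact this.congr_deriv (by push_cast; ring)

lemma hasDerivAt_gtilde_deriv2 :
    HasDerivAt (fun x => 2 * x * cosh x + (x ^ 2 + y ^ 2 - 2) * sinh x)
      ((x ^ 2 + y ^ 2) * cosh x + 4 * x * sinh x) x := by
  have := (((hasDerivAt_id' x).const_mul 2).fun_mul (hasDerivAt_cosh x)).fun_add
    ((((hasDerivAt_pow 2 x).add_const (y ^ 2)).sub_const 2).fun_mul (hasDerivAt_sinh x))
  exact this.congr_deriv (by push_cast; ring)

end

theorem gtilde_monotone (y : ℝ) :
    Monotone (fun x : ℝ =>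
      2 * x * Real.cos y - 2 * x * Real.cosh x + (x ^ 2 + y ^ 2) * Real.sinh x) := by
  have hderiv2_nonneg : ∀ x : ℝ, 0 ≤ (x ^ 2 + y ^ 2) * cosh x + 4 * x * sinh x := fun x => by
    nlinarith [mul_sinh_nonneg_s4 x, cosh_pos x, sq_nonneg x, sq_nonneg y]
  have hderiv_mono := monotone_of_hasDerivAt_nonneg (hasDerivAt_gtilde_deriv2 y) hderiv2_nonneg
  refine monotone_of_hasDerivAt_nonneg (hasDerivAt_gtilde y) fun x => ?_
  calc (0 : ℝ) ≤ 2 * cos y + (0 ^ 2 + y ^ 2 - 2) * cosh 0 := by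
        simpa [← add_sub_assoc] using two_mul_cos_add_sq_sub_two_nonneg y
    _ ≤ 2 * cos y + (x ^ 2 + y ^ 2 - 2) * cosh x :=
        le_apply_of_hasDerivAt_of_monotone (hasDerivAt_gtilde_deriv y) hderiv_mono (by simp) x
end

section
/- For every complex ζ with Re ζ ≥ 0 and |Im ζ| ≤ π/2, one has |log(1 + exp(π·sinh ζ))| ≥ log 2, i.e., |1/log(1 + exp(π·sinh ζ))| ≤ 1/log 2. -/
/-!
On the half-strip, `Re (π sinh ζ) = π sinh (Re ζ) cos (Im ζ) ≥ 0`, so `w = 1 + exp (π sinh ζ)`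
satisfies `‖w - 1‖ ≥ 1`. Writing `L = log w`, the power series bound
`‖exp L - 1‖ ≤ exp ‖L‖ - 1` then forces `exp ‖L‖ ≥ 2`.
-/

open Complex Real

namespace Complex

theorem sinh_re (z : ℂ) : (sinh z).re = Real.sinh z.re * Real.cos z.im := by
  conv_lhs => rw [← re_add_im z, sinh_add, sinh_mul_I, cosh_mul_I]
  simp [sinh_ofReal_re, cos_ofReal_re]

theorem sinh_re_nonneg {z : ℂ} (hre : 0 ≤ z.re) (him : |z.im| ≤ π / 2) :
    0 ≤ (sinh z).re := by
  rw [sinh_re]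
  exact mul_nonneg (Real.sinh_nonneg_iff.mpr hre)
    (Real.cos_nonneg_of_mem_Icc (abs_le.mp him))

theorem norm_exp_sub_one_le_exp_norm_sub_one (z : ℂ) : ‖exp z - 1‖ ≤ Real.exp ‖z‖ - 1 := by
  simpa using norm_exp_sub_sum_le_exp_norm_sub_sum z 1

theorem log_two_le_norm_log_of_one_le_norm_sub_one {w : ℂ} (hw : w ≠ 0) (h : 1 ≤ ‖w - 1‖) :
    Real.log 2 ≤ ‖log w‖ := by
  have h2 : 2 ≤ Real.exp ‖log w‖ := by
    have hexp := norm_exp_sub_one_le_exp_norm_sub_one (log w)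
    rw [exp_log hw] at hexp
    linarith
  exact (Real.log_le_iff_le_exp two_pos).mpr h2

end Complex

theorem abs_log_one_add_exp_pi_sinh_ge (ζ : ℂ)
    (hre : 0 ≤ ζ.re) (him : |ζ.im| ≤ π / 2)
    (hne : (1 : ℂ) + Complex.exp (π * Complex.sinh ζ) ≠ 0) :
    ‖Complex.log (1 + Complex.exp (π * Complex.sinh ζ))‖ ≥ Real.log 2 := by
  have hw : 0 ≤ ((π : ℂ) * sinh ζ).re := by
    rw [re_ofReal_mul]
    exact mul_nonneg pi_pos.le (sinh_re_nonneg hre him)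
  refine log_two_le_norm_log_of_one_le_norm_sub_one hne ?_
  rw [add_sub_cancel_left, norm_exp]
  exact Real.one_le_exp hw
end

section
/- For all real y with |y| ≤ π, √( (log(2·cos(y/2)))² + (y/2)² ) ≥ log 2; equivalently |Log(1 + e^{iy})| ≥ log 2, where Log is the principal complex logarithm (for |y| < π). -/
open Real

theorem sqrt_log_sq_add_sq_ge_log_two (y : ℝ) (hy : |y| ≤ π) :
    Real.sqrt ((Real.log (2 * Real.cos (y / 2))) ^ 2 + (y / 2) ^ 2) ≥ Real.log 2 := by
  set t := y / 2 with ht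
  set L := Real.log 2 with hL
  have hLpos : 0 < L := Real.log_pos (by norm_num)
  rcases le_or_gt L |t| with h | h
  · calc L ≤ |t| := h
      _ = Real.sqrt (t ^ 2) := (Real.sqrt_sq_eq_abs t).symm
      _ ≤ _ := Real.sqrt_le_sqrt (by nlinarith [sq_nonneg (Real.log (2 * Real.cos t))])
  · have hLlt : L < 0.6931471808 := Real.log_two_lt_d9
    have ht2 : t ^ 2 ≤ L ^ 2 := by nlinarith [sq_abs t, abs_nonneg t]
    set x := t ^ 2 / 2 with hx
    have hx0 : 0 ≤ x := by positivity
    have hxL : x ≤ L ^ 2 / 2 := by simp only [hx]; linarith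
    -- step 1: 1 - x ≥ L/(L+x)
    have h1 : L / (L + x) ≤ 1 - x := by
      have hx1 : x ≤ 1 - L := by nlinarith
      rw [div_le_iff₀ (by linarith)]
      nlinarith [mul_nonneg hx0 (by linarith : (0:ℝ) ≤ 1 - L - x)]
    -- step 2: exp(-(x/L)) ≤ L/(L+x)
    have h2 : Real.exp (-(x / L)) ≤ L / (L + x) := by
      have he : (L + x) / L ≤ Real.exp (x / L) := by
        have := Real.add_one_le_exp (x / L)
        have : 1 + x / L ≤ Real.exp (x / L) := by linarith
        calc (L + x) / L = 1 + x / L := by field_simp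
          _ ≤ _ := this
      have hpos : 0 < (L + x) / L := by positivity
      rw [Real.exp_neg]
      calc (Real.exp (x / L))⁻¹ ≤ ((L + x) / L)⁻¹ := by
            apply inv_anti₀ hpos he
        _ = L / (L + x) := by rw [inv_div]
      -- done
    -- cos bound
    have hcos : Real.exp (-(x / L)) ≤ Real.cos t := by
      have h3 : 1 - t ^ 2 / 2 ≤ Real.cos t := Real.one_sub_sq_div_two_le_cos
      calc Real.exp (-(x / L)) ≤ L / (L + x) := h2
        _ ≤ 1 - x := h1
        _ = 1 - t ^ 2 / 2 := by rw [hx]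
        _ ≤ Real.cos t := h3
    have hcospos : 0 < Real.cos t := lt_of_lt_of_le (Real.exp_pos _) hcos
    have hlog : L - x / L ≤ Real.log (2 * Real.cos t) := by
      have : Real.exp (L - x / L) ≤ 2 * Real.cos t := by
        rw [Real.exp_sub, hL, Real.exp_log (by norm_num : (0:ℝ) < 2)]
        rw [div_le_iff₀ (Real.exp_pos _)] at *
        calc (2:ℝ) = 2 * 1 := by ring
          _ ≤ 2 * (Real.cos t * Real.exp (x / L)) := by
              have : 1 ≤ Real.cos t * Real.exp (x / L) := by
                have := hcos
                rw [Real.exp_neg] at this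
                rw [inv_le_iff_one_le_mul₀ (Real.exp_pos _)] at this
                nlinarith [Real.exp_pos (x / L)]
              linarith
          _ = 2 * Real.cos t * Real.exp (x / L) := by ring
      calc L - x / L = Real.log (Real.exp (L - x / L)) := (Real.log_exp _).symm
        _ ≤ _ := Real.log_le_log (Real.exp_pos _) this
    have hnn : 0 ≤ L - x / L := by
      have : x / L ≤ L / 2 := by
        rw [div_le_iff₀ hLpos]
        nlinarith
      linarith
    have hkey : L ^ 2 ≤ (Real.log (2 * Real.cos t)) ^ 2 + t ^ 2 := by
      have ha : (L - x / L) ^ 2 ≤ (Real.log (2 * Real.cos t)) ^ 2 := by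
        nlinarith
      have : L ^ 2 - t ^ 2 ≤ (L - x / L) ^ 2 := by
        have hxt : 2 * x = t ^ 2 := by rw [hx]; ring
        have hd : x / L * L = x := div_mul_cancel₀ x hLpos.ne'
        nlinarith [sq_nonneg (x / L)]
      linarith
    calc L = Real.sqrt (L ^ 2) := (Real.sqrt_sq hLpos.le).symm
      _ ≤ _ := Real.sqrt_le_sqrt hkey
end

section
/- For every complex number w with Re w ≤ 0 and w in the strip where η := Log(1 + e^w) has |Im η| ≤ π/2, the quantity (1/e)·|η/(e^η − 1)|·|(e^{η+1} − 1)/(η + 1)| is at most (e² + e + 1)/(e² + e). Equivalently, writing η = x + iy with |y| ≤ π/2, one has (1/e)·g(x+1,y)/g(x,y) ≤ ((e²+e+1)/(e²+e))², where g(x,y) = (cosh x − cos y)/(x² + y²). -/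
/-!
Write `η = x + iy`. As `‖exp z - 1‖ ^ 2 = 2 exp (re z) (cosh (re z) - cos (im z))`, the square of
the left-hand side is `g (x + 1, y) / (e g (x, y))`; since `3 / e ≤ ((e² + e + 1) / (e² + e)) ^ 2`,
it suffices that `g (x + 1, y) ≤ 3 g (x, y)`. Of `y` we only use that `s = y²` and `c = cos y`
satisfy `0 ≤ c` and `1 - s / 2 ≤ c ≤ 1 - s / 5`. For `x ≥ 1` the inequality follows from
`cosh (x + 1) ≤ e cosh x`, for `x ≤ -2` from `cosh 1 cosh (x + 1) ≤ cosh x`. In between, `exp` is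
replaced by its cubic Taylor polynomial at `x` (or at `x + 1`) and `e`, `1 / e` by decimal bounds;
what is left is a polynomial `x² p₀(x) + s p₁(x) + κ s²` with `p₀`, `p₁` positive on the interval.
-/

open Real Set

lemma abs_exp_sub_cubic_le {t : ℝ} (ht : |t| ≤ 1) :
    |exp t - (1 + t + t ^ 2 / 2 + t ^ 3 / 6)| ≤ 5 / 96 * t ^ 4 := by
  convert Real.exp_bound ht (n := 4) (by norm_num) using 1
  · simp only [Finset.sum_range_succ, Finset.sum_range_zero, Nat.factorial]
    ring_nf
  · rw [pow_abs, abs_of_nonneg (by positivity)]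
    norm_num [Nat.factorial]
    ring

lemma cubic_sub_quartic_le_exp {t : ℝ} (ht : |t| ≤ 1) :
    1 + t + t ^ 2 / 2 + t ^ 3 / 6 - 5 / 96 * t ^ 4 ≤ exp t := by
  linarith [(abs_le.1 (abs_exp_sub_cubic_le ht)).1]

lemma cubic_sub_quartic_nonneg {t : ℝ} (ht : |t| ≤ 1) :
    0 ≤ 1 + t + t ^ 2 / 2 + t ^ 3 / 6 - 5 / 96 * t ^ 4 := by
  obtain ⟨h₀, h₁⟩ := abs_le.1 ht
  nlinarith [mul_nonneg (sq_nonneg t) (by nlinarith : 0 ≤ 1 / 2 + t / 6 - 5 / 96 * t ^ 2)]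

lemma one_add_sq_div_two_le_cosh (x : ℝ) : 1 + x ^ 2 / 2 ≤ cosh x := by
  rw [← cosh_abs, ← sq_abs]
  have h := cosh_two_mul (|x| / 2)
  rw [mul_div_cancel₀ _ two_ne_zero, cosh_sq] at h
  have hx : 0 ≤ |x| / 2 := by positivity
  have hs := self_le_sinh_iff.2 hx
  nlinarith [mul_le_mul hs hs hx (hx.trans hs)]

lemma cosh_add_one_le (x : ℝ) : cosh (x + 1) ≤ exp 1 * cosh x := by
  rw [cosh_eq, cosh_eq, neg_add, exp_add, exp_add]
  nlinarith [exp_pos (-x), exp_pos x, exp_le_exp.2 (show (-1 : ℝ) ≤ 1 by norm_num)]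

lemma cosh_one_mul_cosh_add_one_le {x : ℝ} (hx : x ≤ -1) :
    cosh 1 * cosh (x + 1) ≤ cosh x := by
  have h := cosh_sub (x + 1) 1
  rw [add_sub_cancel_right] at h
  nlinarith [sinh_nonpos_iff.2 (by linarith : x + 1 ≤ 0), sinh_nonneg_iff.2 zero_le_one]

lemma exp_one_mem_Icc : exp 1 ∈ Icc 2.718 2.719 :=
  ⟨by linarith [exp_one_gt_d9], by linarith [exp_one_lt_d9]⟩

lemma exp_neg_one_mem_Icc : exp (-1) ∈ Icc 0.3678 0.3679 :=
  ⟨by linarith [exp_neg_one_gt_d9], by linarith [exp_neg_one_lt_d9]⟩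

lemma cos_le_one_sub_sq_div_five {y : ℝ} (hy : |y| ≤ π) : cos y ≤ 1 - y ^ 2 / 5 := by
  have h : 1 / 5 ≤ 2 / π ^ 2 := by
    rw [div_le_div_iff₀ (by norm_num) (by positivity)]
    nlinarith [pi_lt_d2, pi_pos]
  nlinarith [cos_le_one_sub_mul_cos_sq hy, sq_nonneg y]

lemma mul_sub_le_mul_of_abs_sub_le {k K a b δ : ℝ} (hab : |a - b| ≤ δ) (hk : |k| ≤ K) :
    k * b - K * δ ≤ k * a := by
  have h : |k * (a - b)| ≤ K * δ := by
    rw [abs_mul]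
    exact mul_le_mul hk hab (abs_nonneg _) ((abs_nonneg k).trans hk)
  nlinarith [neg_abs_le (k * (a - b))]

/-- `0 ≤ shiftGap x (y ^ 2) (cos y)` is `g (x + 1, y) ≤ 3 g (x, y)` with denominators cleared. -/
noncomputable def shiftGap (x s c : ℝ) : ℝ :=
  3 * ((x + 1) ^ 2 + s) * (cosh x - c) - (x ^ 2 + s) * (cosh (x + 1) - c)

lemma two_mul_shiftGap (x s c : ℝ) :
    2 * shiftGap x s c = exp x * (3 * ((x + 1) ^ 2 + s) - exp 1 * (x ^ 2 + s))
      + exp (-x) * (3 * ((x + 1) ^ 2 + s) - exp (-1) * (x ^ 2 + s))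
      - 2 * c * (3 * ((x + 1) ^ 2 + s) - (x ^ 2 + s)) := by
  rw [shiftGap, cosh_eq, cosh_eq, neg_add, exp_add, exp_add]
  ring

lemma two_mul_shiftGap_sub_one (z s c : ℝ) :
    2 * shiftGap (z - 1) s c = exp z * (3 * exp (-1) * (z ^ 2 + s) - ((z - 1) ^ 2 + s))
      + exp (-z) * (3 * exp 1 * (z ^ 2 + s) - ((z - 1) ^ 2 + s))
      - 2 * c * (3 * (z ^ 2 + s) - ((z - 1) ^ 2 + s)) := by
  rw [shiftGap, sub_add_cancel, cosh_eq, cosh_eq, show z - 1 = z + -1 by ring,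
    show -(z + -1) = -z + 1 by ring, exp_add, exp_add]
  ring

section Regions

variable {x z s c : ℝ}

lemma shiftGap_nonneg_of_one_le (hx : 1 ≤ x) (hs : 0 ≤ s) (hc : c ≤ 1 - s / 5) :
    0 ≤ shiftGap x s c := by
  obtain ⟨he₁, he₂⟩ := exp_one_mem_Icc
  have hB : 0 ≤ x ^ 2 + s := by positivity
  have hk : 9 ≤ 3 * ((x + 1) ^ 2 + s) - exp 1 * (x ^ 2 + s) := by nlinarith
  have hu : x ^ 2 / 2 + s / 5 ≤ cosh x - c := by linarith [one_add_sq_div_two_le_cosh x]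
  have hU := mul_le_mul_of_nonneg_left (cosh_add_one_le x) hB
  have hu₀ : 0 ≤ cosh x - c := (by positivity : (0 : ℝ) ≤ x ^ 2 / 2 + s / 5).trans hu
  unfold shiftGap
  nlinarith [mul_le_mul hu hk (by norm_num) hu₀,
    mul_nonneg (mul_nonneg (by linarith : 0 ≤ exp 1 - 1) hB) (by linarith : 0 ≤ 1 - c),
    mul_nonneg (by linarith : 0 ≤ 2.719 - exp 1) hB]

lemma shiftGap_nonneg_of_le_neg_two (hx : x ≤ -2) (hs : 0 ≤ s) (hc₀ : 0 ≤ c) (hc : c ≤ 1) :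
    0 ≤ shiftGap x s c := by
  have ha := one_add_sq_div_two_le_cosh 1
  have hU := cosh_one_mul_cosh_add_one_le (by linarith : x ≤ -1)
  have hk : 0 ≤ 3 * cosh 1 * ((x + 1) ^ 2 + s) - (x ^ 2 + s) := by nlinarith
  unfold shiftGap
  nlinarith [mul_nonneg hk (by linarith [one_le_cosh (x + 1)] : 0 ≤ cosh (x + 1) - c),
    mul_nonneg (mul_nonneg (by positivity : (0 : ℝ) ≤ (x + 1) ^ 2 + s) hc₀)
      (by linarith : 0 ≤ cosh 1 - 1)]

lemma shiftGap_taylor_nonneg_of_mem_Icc (hx : x ∈ Icc (-1 / 2 : ℝ) 1) (hs : 0 ≤ s)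
    (hc : c ≤ 1 - s / 5) :
    0 ≤ (1 + x + x ^ 2 / 2 + x ^ 3 / 6 - 5 / 96 * x ^ 4)
          * (3 * ((x + 1) ^ 2 + s) - 2.719 * (x ^ 2 + s))
      + (1 - x + x ^ 2 / 2 - x ^ 3 / 6 - 5 / 96 * x ^ 4)
          * (3 * ((x + 1) ^ 2 + s) - 0.3679 * (x ^ 2 + s))
      - 2 * c * (3 * ((x + 1) ^ 2 + s) - (x ^ 2 + s)) := by
  obtain ⟨hx₀, hx₁⟩ := hx
  have hI : 0 ≤ (x + 1 / 2) * (1 - x) := mul_nonneg (by linarith) (by linarith)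
  -- at `c = 1 - s / 5` the polynomial is `x² p₀ + s p₁ + 4 s² / 5`
  have hp₀ : 0 ≤ 19131 / 10000 + 36489 / 10000 * x + 22881 / 20000 * x ^ 2
      - 20337 / 20000 * x ^ 3 - 29131 / 192000 * x ^ 4 := by
    nlinarith [sq_nonneg x, sq_nonneg (x ^ 2), mul_nonneg hI (sq_nonneg x)]
  have hp₁ : 0 ≤ 1131 / 10000 + 489 / 10000 * x + 45131 / 20000 * x ^ 2
      - 7837 / 20000 * x ^ 3 - 29131 / 192000 * x ^ 4 := by
    nlinarith [sq_nonneg x, sq_nonneg (x ^ 2), mul_nonneg hI (sq_nonneg x)]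
  have hk : 0 ≤ 3 * ((x + 1) ^ 2 + s) - (x ^ 2 + s) := by nlinarith
  nlinarith [mul_nonneg (sq_nonneg x) hp₀, mul_nonneg hs hp₁, sq_nonneg s,
    mul_nonneg hk (by linarith : 0 ≤ 1 - s / 5 - c)]

lemma shiftGap_nonneg_of_mem_Icc (hx : x ∈ Icc (-1 / 2 : ℝ) 1) (hs : 0 ≤ s)
    (hc : c ≤ 1 - s / 5) : 0 ≤ shiftGap x s c := by
  obtain ⟨-, he⟩ := exp_one_mem_Icc
  obtain ⟨-, he'⟩ := exp_neg_one_mem_Icc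
  have hxabs : |x| ≤ 1 := abs_le.2 ⟨by linarith [hx.1], hx.2⟩
  have hx' : |-x| ≤ 1 := (abs_neg x).trans_le hxabs
  have hB : 0 ≤ x ^ 2 + s := by positivity
  have hkE : 0 ≤ 3 * ((x + 1) ^ 2 + s) - exp 1 * (x ^ 2 + s) := by nlinarith [hx.1]
  have hkF : 0 ≤ 3 * ((x + 1) ^ 2 + s) - exp (-1) * (x ^ 2 + s) := by nlinarith [hx.1]
  nlinarith [two_mul_shiftGap x s c, shiftGap_taylor_nonneg_of_mem_Icc hx hs hc,
    mul_le_mul_of_nonneg_right (cubic_sub_quartic_le_exp hxabs) hkE,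
    mul_le_mul_of_nonneg_right (cubic_sub_quartic_le_exp hx') hkF,
    mul_nonneg (mul_nonneg (cubic_sub_quartic_nonneg hxabs) hB)
      (by linarith : 0 ≤ 2.719 - exp 1),
    mul_nonneg (mul_nonneg (cubic_sub_quartic_nonneg hx') hB)
      (by linarith : 0 ≤ 0.3679 - exp (-1))]

lemma shiftGap_sub_one_taylor_nonneg_of_mem_Icc (hz : z ∈ Icc (-1 : ℝ) (1 / 2)) (hs : 0 ≤ s)
    (hc₀ : 1 - s / 2 ≤ c) (hc : c ≤ 1 - s / 5) :
    0 ≤ 3 * 0.3678 * (z ^ 2 + s) * (1 + z + z ^ 2 / 2 + z ^ 3 / 6 - 5 / 96 * z ^ 4)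
      + 3 * 2.718 * (z ^ 2 + s) * (1 - z + z ^ 2 / 2 - z ^ 3 / 6 - 5 / 96 * z ^ 4)
      - ((z - 1) ^ 2 + s) * (2 + z ^ 2 + 5 / 48 * z ^ 4)
      - 2 * c * (3 * (z ^ 2 + s) - ((z - 1) ^ 2 + s)) := by
  obtain ⟨hz₀, hz₁⟩ := hz
  have hI : 0 ≤ (z + 1) * (1 / 2 - z) := mul_nonneg (by linarith) (by linarith)
  -- at either endpoint `c = 1 - κ s` the polynomial is `z² q₀ + s q₁ + 4 κ s²`
  have hq₀ : 0 ≤ 11287 / 5000 - 25253 / 5000 * z + 13217 / 3750 * z ^ 2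
      - 29003 / 30000 * z ^ 3 - 56287 / 96000 * z ^ 4 := by
    nlinarith [sq_nonneg z, sq_nonneg (z ^ 2), mul_nonneg hI (sq_nonneg z)]
  rcases le_total 0 (3 * (z ^ 2 + s) - ((z - 1) ^ 2 + s)) with hk | hk
  · have hq₁ : 0 ≤ 14287 / 5000 - 31253 / 5000 * z + 44287 / 10000 * z ^ 2
        - 11751 / 10000 * z ^ 3 - 56287 / 96000 * z ^ 4 := by
      nlinarith [sq_nonneg z, sq_nonneg (z ^ 2), mul_nonneg hI (sq_nonneg z)]
    nlinarith [mul_nonneg (sq_nonneg z) hq₀, mul_nonneg hs hq₁, sq_nonneg s,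
      mul_nonneg hk (by linarith : 0 ≤ 1 - s / 5 - c)]
  · have hq₁ : 0 ≤ 11287 / 5000 - 25253 / 5000 * z + 56287 / 10000 * z ^ 2
        - 11751 / 10000 * z ^ 3 - 56287 / 96000 * z ^ 4 := by
      nlinarith [sq_nonneg z, sq_nonneg (z ^ 2), mul_nonneg hI (sq_nonneg z)]
    nlinarith [mul_nonneg (sq_nonneg z) hq₀, mul_nonneg hs hq₁, sq_nonneg s,
      mul_nonneg (neg_nonneg.2 hk) (by linarith : 0 ≤ c - (1 - s / 2))]

lemma shiftGap_sub_one_nonneg_of_mem_Icc (hz : z ∈ Icc (-1 : ℝ) (1 / 2)) (hs : 0 ≤ s)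
    (hc₀ : 1 - s / 2 ≤ c) (hc : c ≤ 1 - s / 5) : 0 ≤ shiftGap (z - 1) s c := by
  obtain ⟨he, -⟩ := exp_one_mem_Icc
  obtain ⟨he', -⟩ := exp_neg_one_mem_Icc
  have hzabs : |z| ≤ 1 := abs_le.2 ⟨hz.1, by linarith [hz.2]⟩
  have hz' : |-z| ≤ 1 := (abs_neg z).trans_le hzabs
  have hA : 0 ≤ z ^ 2 + s := by positivity
  have hB : 0 ≤ (z - 1) ^ 2 + s := by positivity
  -- the coefficients of `exp z` and `exp (-z)` change sign here, so two-sided bounds are needed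
  have hE := mul_sub_le_mul_of_abs_sub_le (abs_exp_sub_cubic_le hzabs)
    (k := 3 * exp (-1) * (z ^ 2 + s) - ((z - 1) ^ 2 + s))
    (K := 3 * exp (-1) * (z ^ 2 + s) + ((z - 1) ^ 2 + s))
    (abs_le.2 ⟨by nlinarith [exp_pos (-1)], by nlinarith [exp_pos (-1)]⟩)
  have hF := mul_sub_le_mul_of_abs_sub_le (abs_exp_sub_cubic_le hz')
    (k := 3 * exp 1 * (z ^ 2 + s) - ((z - 1) ^ 2 + s))
    (K := 3 * exp 1 * (z ^ 2 + s) + ((z - 1) ^ 2 + s))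
    (abs_le.2 ⟨by nlinarith [exp_pos 1], by nlinarith [exp_pos 1]⟩)
  nlinarith [two_mul_shiftGap_sub_one z s c,
    shiftGap_sub_one_taylor_nonneg_of_mem_Icc hz hs hc₀ hc,
    mul_nonneg (mul_nonneg hA (cubic_sub_quartic_nonneg hzabs))
      (by linarith : 0 ≤ exp (-1) - 0.3678),
    mul_nonneg (mul_nonneg hA (cubic_sub_quartic_nonneg hz')) (by linarith : 0 ≤ exp 1 - 2.718)]

end Regions

lemma shiftGap_nonneg (x : ℝ) {s c : ℝ} (hs : 0 ≤ s) (hc₀ : 0 ≤ c) (hc₁ : 1 - s / 2 ≤ c)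
    (hc : c ≤ 1 - s / 5) : 0 ≤ shiftGap x s c := by
  rcases le_total 1 x with h₁ | h₁
  · exact shiftGap_nonneg_of_one_le h₁ hs hc
  rcases le_total (-1 / 2) x with h₂ | h₂
  · exact shiftGap_nonneg_of_mem_Icc ⟨h₂, h₁⟩ hs hc
  rcases le_total (-2) x with h₃ | h₃
  · simpa using
      shiftGap_sub_one_nonneg_of_mem_Icc (z := x + 1) ⟨by linarith, by linarith⟩ hs hc₁ hc
  · exact shiftGap_nonneg_of_le_neg_two h₃ hs hc₀ (by linarith)

lemma shiftGap_sq_cos_nonneg (x : ℝ) {y : ℝ} (hy : |y| ≤ π / 2) :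
    0 ≤ shiftGap x (y ^ 2) (cos y) :=
  shiftGap_nonneg x (sq_nonneg y) (cos_nonneg_of_mem_Icc (abs_le.1 hy)) one_sub_sq_div_two_le_cos
    (cos_le_one_sub_sq_div_five (hy.trans (by linarith [pi_pos])))

lemma three_mul_exp_one_le_sq :
    3 * exp 1 ≤ ((exp 1 ^ 2 + exp 1 + 1) / (exp 1 ^ 2 + exp 1) * exp 1) ^ 2 := by
  obtain ⟨he, -⟩ := exp_one_mem_Icc
  rw [div_mul_eq_mul_div, div_pow, le_div_iff₀ (by positivity)]
  nlinarith [mul_nonneg (mul_nonneg (by linarith : (0 : ℝ) ≤ exp 1 - 2.718)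
    (by positivity : 0 ≤ exp 1 ^ 2)) (by positivity : 0 ≤ exp 1 ^ 3),
    pow_pos (by linarith : (0 : ℝ) < exp 1) 5]

open Complex

lemma sq_norm_exp_sub_one (z : ℂ) :
    ‖cexp z - 1‖ ^ 2 = 2 * rexp z.re * (Real.cosh z.re - Real.cos z.im) := by
  rw [Complex.sq_norm, normSq_apply, sub_re, sub_im, exp_re, exp_im, one_re, one_im,
    Real.cosh_eq]
  have h := Real.exp_add z.re (-z.re)
  rw [add_neg_cancel, Real.exp_zero] at h
  linear_combination rexp z.re ^ 2 * Real.sin_sq_add_cos_sq z.im + h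

lemma sq_norm_mul_norm_exp_add_one_sub_one_le (η : ℂ) (hη : |η.im| ≤ π / 2) :
    (‖η‖ * ‖cexp (η + 1) - 1‖) ^ 2 ≤ 3 * rexp 1 * (‖cexp η - 1‖ * ‖η + 1‖) ^ 2 := by
  have h := mul_nonneg (by positivity : 0 ≤ 2 * rexp η.re * rexp 1)
    (shiftGap_sq_cos_nonneg η.re hη)
  have hη₀ : ‖η‖ ^ 2 = η.re ^ 2 + η.im ^ 2 := by rw [Complex.sq_norm, normSq_apply]; ring
  have hη₁ : ‖η + 1‖ ^ 2 = (η.re + 1) ^ 2 + η.im ^ 2 := by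
    rw [Complex.sq_norm, normSq_apply, add_re, add_im, one_re, one_im, add_zero]; ring
  rw [mul_pow, mul_pow, hη₀, hη₁, sq_norm_exp_sub_one, sq_norm_exp_sub_one, add_re, add_im,
    one_re, one_im, add_zero, Real.exp_add]
  unfold shiftGap at h
  linarith

lemma norm_div_exp_sub_one_mul_norm_div_le (η : ℂ) (hη : |η.im| ≤ π / 2) :
    1 / rexp 1 * ‖η / (cexp η - 1)‖ * ‖(cexp (η + 1) - 1) / (η + 1)‖
      ≤ (rexp 1 ^ 2 + rexp 1 + 1) / (rexp 1 ^ 2 + rexp 1) := by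
  rw [norm_div, norm_div,
    show ∀ a b c d e : ℝ, 1 / e * (a / b) * (c / d) = a * c / (e * (b * d)) by intros; ring]
  refine div_le_of_le_mul₀ (by positivity) (by positivity)
    (le_of_pow_le_pow_left₀ two_ne_zero (by positivity) ?_)
  calc (‖η‖ * ‖cexp (η + 1) - 1‖) ^ 2 ≤ 3 * rexp 1 * (‖cexp η - 1‖ * ‖η + 1‖) ^ 2 :=
        sq_norm_mul_norm_exp_add_one_sub_one_le η hη
    _ ≤ ((rexp 1 ^ 2 + rexp 1 + 1) / (rexp 1 ^ 2 + rexp 1) * rexp 1) ^ 2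
          * (‖cexp η - 1‖ * ‖η + 1‖) ^ 2 := by gcongr; exact three_mul_exp_one_le_sq
    _ = _ := by ring

theorem eta_ratio_bound_general (w : ℂ)
    (him : |(Complex.log (1 + Complex.exp w)).im| ≤ π / 2) :
    (1 / Real.exp 1) *
      ‖(Complex.log (1 + Complex.exp w)) /
        (Complex.exp (Complex.log (1 + Complex.exp w)) - 1)‖ *
      ‖(Complex.exp (Complex.log (1 + Complex.exp w) + 1) - 1) /
        (Complex.log (1 + Complex.exp w) + 1)‖
      ≤ (Real.exp 1 ^ 2 + Real.exp 1 + 1) / (Real.exp 1 ^ 2 + Real.exp 1) :=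
  norm_div_exp_sub_one_mul_norm_div_le _ him

theorem eta_ratio_bound (w : ℂ) (hre : w.re ≤ 0)
    (him : |(Complex.log (1 + Complex.exp w)).im| ≤ π / 2) :
    (1 / Real.exp 1) *
      ‖(Complex.log (1 + Complex.exp w)) /
        (Complex.exp (Complex.log (1 + Complex.exp w)) - 1)‖ *
      ‖(Complex.exp (Complex.log (1 + Complex.exp w) + 1) - 1) /
        (Complex.log (1 + Complex.exp w) + 1)‖
      ≤ (Real.exp 1 ^ 2 + Real.exp 1 + 1) / (Real.exp 1 ^ 2 + Real.exp 1) :=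
  eta_ratio_bound_general w him
end

section
/- For all x ∈ ℝ and y ∈ [−π/2, π/2] with (x,y) ≠ (0,0) and (x+1,y) ≠ (0,0): (cosh(x+1) − cos y)/((x+1)² + y²) ≤ e·((e²+e+1)/(e²+e))² · (cosh(x) − cos y)/(x² + y²). -/
/-! Let `𝒞 = e ((e² + e + 1) / (e² + e))²`, which equals `(cosh 3 - 1) / (cosh 2 - 1)`. For fixed
`y`, `t ↦ (cosh t - cos y) / (t² + y²)` increases in `|t|`; this settles `x ≤ -1`, as `1 ≤ 𝒞`.
For `-1 < x ≤ 2` the left side is at most its value at `t = 3`, hence at most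
`cosh 3 / 9 ≤ 2𝒞 / 5`, while the right-hand quotient is at least `2 / 5` because
`cosh x - 1 ≥ x² / 2` and `1 - cos y ≥ 2y² / 5` for `|y| ≤ π / 2`. For `x ≥ 2` the larger
denominator only helps, and `cosh (x + 1) - 1 ≤ 𝒞 (cosh x - 1)` because the ratio
`(cosh (x + 1) - 1) / (cosh x - 1)` decreases in `x > 0` and equals `𝒞` at `x = 2`. -/

open Real

local notation "𝒞" => exp 1 * ((exp 1 ^ 2 + exp 1 + 1) / (exp 1 ^ 2 + exp 1)) ^ 2

lemma convexOn_sinh_Ici : ConvexOn ℝ (Set.Ici 0) sinh := by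
  refine MonotoneOn.convexOn_of_deriv (convex_Ici 0) continuous_sinh.continuousOn
    differentiable_sinh.differentiableOn ?_
  rw [Real.deriv_sinh, interior_Ici]
  intro a ha b hb hab
  exact cosh_le_cosh.2 (by rwa [abs_of_pos ha, abs_of_pos hb])

lemma mul_sinh_le_mul_sinh {a b : ℝ} (ha : 0 ≤ a) (hab : a ≤ b) :
    b * sinh a ≤ a * sinh b := by
  rcases hab.eq_or_lt with rfl | hab
  · rw [mul_comm]
  have hb : 0 < b := ha.trans_lt hab
  have h := convexOn_sinh_Ici.2 (Set.mem_Ici.2 hb.le) (Set.mem_Ici.2 le_rfl)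
    (div_nonneg ha hb.le) (sub_nonneg.2 ((div_le_one hb).2 hab.le)) (add_sub_cancel _ _)
  simp only [smul_eq_mul, mul_zero, add_zero, sinh_zero, div_mul_cancel₀ a hb.ne'] at h
  rwa [div_mul_eq_mul_div, le_div_iff₀ hb, mul_comm] at h

lemma cosh_sub_one_eq_two_mul_sinh_sq (t : ℝ) : cosh t - 1 = 2 * sinh (t / 2) ^ 2 := by
  have h := cosh_two_mul (t / 2)
  rw [mul_div_cancel₀ t two_ne_zero, cosh_sq] at h
  linarith

lemma sq_mul_cosh_sub_one_le {a b : ℝ} (ha : 0 ≤ a) (hab : a ≤ b) :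
    b ^ 2 * (cosh a - 1) ≤ a ^ 2 * (cosh b - 1) := by
  have h := mul_sinh_le_mul_sinh (by positivity : 0 ≤ a / 2) (by linarith : a / 2 ≤ b / 2)
  have h₀ : 0 ≤ b / 2 * sinh (a / 2) :=
    mul_nonneg (by linarith) (sinh_nonneg_iff.2 (by positivity))
  rw [cosh_sub_one_eq_two_mul_sinh_sq, cosh_sub_one_eq_two_mul_sinh_sq]
  nlinarith [mul_le_mul h h h₀ (h₀.trans h)]

lemma cosh_sub_cosh (a b : ℝ) :
    cosh b - cosh a = 2 * sinh ((b + a) / 2) * sinh ((b - a) / 2) := by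
  have hb := cosh_add ((b + a) / 2) ((b - a) / 2)
  have ha := cosh_sub ((b + a) / 2) ((b - a) / 2)
  rw [show (b + a) / 2 + (b - a) / 2 = b by ring] at hb
  rw [show (b + a) / 2 - (b - a) / 2 = a by ring] at ha
  linarith

lemma sq_sub_sq_div_two_le_cosh_sub_cosh {a b : ℝ} (hab : |a| ≤ b) :
    (b ^ 2 - a ^ 2) / 2 ≤ cosh b - cosh a := by
  obtain ⟨h₁, h₂⟩ := abs_le.1 hab
  have hp : 0 ≤ (b + a) / 2 := by linarith
  have hq : 0 ≤ (b - a) / 2 := by linarith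
  rw [cosh_sub_cosh]
  nlinarith [mul_le_mul (self_le_sinh_iff.2 hp) (self_le_sinh_iff.2 hq) hq
    (hp.trans (self_le_sinh_iff.2 hp))]

/-- Split `cosh t - cos y = (cosh t - 1) + (1 - cos y)`: the first part has increasing
`(cosh t - 1) / t ^ 2`, and `1 - cos y ≤ y ^ 2 / 2` is dominated by the growth of `cosh`. -/
lemma cosh_sub_cos_div_le_of_le {a b y : ℝ} (ha : 0 ≤ a) (hab : a ≤ b)
    (hpos : 0 < a ^ 2 + y ^ 2) :
    (cosh a - cos y) / (a ^ 2 + y ^ 2) ≤ (cosh b - cos y) / (b ^ 2 + y ^ 2) := by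
  have hsq : a ^ 2 ≤ b ^ 2 := pow_le_pow_left₀ ha hab 2
  have hcosh := sq_mul_cosh_sub_one_le ha hab
  have hdiff := sq_sub_sq_div_two_le_cosh_sub_cosh ((abs_of_nonneg ha).trans_le hab)
  have hcos : 1 - cos y ≤ y ^ 2 / 2 := by linarith [one_sub_sq_div_two_le_cos (x := y)]
  rw [div_le_div_iff₀ hpos (by linarith)]
  nlinarith [mul_le_mul_of_nonneg_left hcos (sub_nonneg.2 hsq),
    mul_le_mul_of_nonneg_left hdiff (sq_nonneg y)]

lemma two_fifths_mul_sq_le_one_sub_cos {y : ℝ} (hy : |y| ≤ π / 2) :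
    2 / 5 * y ^ 2 ≤ 1 - cos y := by
  set t := |y| / 2 with ht
  have ht₀ : 0 ≤ t := by positivity
  have ht₁ : t ≤ 0.7875 := by linarith [pi_lt_d2]
  have hhalf : 1 - cos y = 2 * sin t ^ 2 := by
    rw [sin_sq_eq_half_sub, ht, mul_div_cancel₀ _ two_ne_zero, cos_abs]
    ring
  have hsin : t * (1 - t ^ 2 / 6) ≤ sin t := by linarith [sin_ge_sub_cube ht₀]
  have hfac : 0 ≤ t * (1 - t ^ 2 / 6) := mul_nonneg ht₀ (by nlinarith)
  have hy : y ^ 2 = 4 * t ^ 2 := by rw [ht, ← sq_abs y]; ring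
  have hfac_sq : 4 / 5 * t ^ 2 ≤ (t * (1 - t ^ 2 / 6)) ^ 2 := by
    have hk : 0.8966 ≤ 1 - t ^ 2 / 6 := by nlinarith
    rw [mul_pow]
    nlinarith [mul_le_mul hk hk (by norm_num) (by linarith), sq_nonneg t]
  rw [hhalf, hy]
  nlinarith [mul_le_mul hsin hsin hfac (hfac.trans hsin)]

lemma sq_add_sq_pos_of_ne_zero {x y : ℝ} (h : (x, y) ≠ (0, 0)) : 0 < x ^ 2 + y ^ 2 := by
  rcases eq_or_ne x 0 with rfl | hx
  · have hy : y ≠ 0 := fun hy => h (by rw [hy])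
    positivity
  · positivity

lemma cosh_sub_one_eq_sq_div (x : ℝ) : cosh x - 1 = (exp x - 1) ^ 2 / (2 * exp x) := by
  rw [cosh_eq, exp_neg]
  field_simp
  ring

lemma cosh_add_one_sub_one_le {x : ℝ} (hx : 2 ≤ x) : cosh (x + 1) - 1 ≤ 𝒞 * (cosh x - 1) := by
  have he : 1 < exp 1 := one_lt_exp_iff.2 one_pos
  have hu : exp 1 ^ 2 ≤ exp x := by
    rw [← exp_nat_mul]
    exact exp_le_exp.2 (by push_cast; linarith)
  rw [cosh_sub_one_eq_sq_div, cosh_sub_one_eq_sq_div, exp_add]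
  generalize exp 1 = e at he hu ⊢
  generalize exp x = u at hu ⊢
  have hue : 1 ≤ u * e := by nlinarith
  have hlin : (e + 1) * (u * e - 1) ≤ (e ^ 2 + e + 1) * (u - 1) := by nlinarith
  have hden : 0 ≤ 2 * e * u * (e + 1) ^ 2 := mul_nonneg (by nlinarith) (sq_nonneg _)
  calc (u * e - 1) ^ 2 / (2 * (u * e))
        = ((e + 1) * (u * e - 1)) ^ 2 / (2 * e * u * (e + 1) ^ 2) := by field_simp
    _ ≤ ((e ^ 2 + e + 1) * (u - 1)) ^ 2 / (2 * e * u * (e + 1) ^ 2) :=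
        div_le_div_of_nonneg_right (pow_le_pow_left₀ (by nlinarith) hlin 2) hden
    _ = e * ((e ^ 2 + e + 1) / (e ^ 2 + e)) ^ 2 * ((u - 1) ^ 2 / (2 * u)) := by
        field_simp

lemma one_le_shiftConst : 1 ≤ 𝒞 := by
  have he : 1 ≤ exp 1 := one_le_exp zero_le_one
  have hr : 1 ≤ (exp 1 ^ 2 + exp 1 + 1) / (exp 1 ^ 2 + exp 1) :=
    (one_le_div (by positivity)).2 (by linarith)
  nlinarith [one_le_pow₀ (n := 2) hr]

lemma cosh_three_div_nine_le : cosh 3 / 9 ≤ 2 / 5 * 𝒞 := by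
  have he₁ : 2.7 < exp 1 := lt_trans (by norm_num) exp_one_gt_d9
  have he₂ : exp 1 < 2.72 := lt_trans exp_one_lt_d9 (by norm_num)
  have hcosh : cosh 3 ≤ 10.6 := by
    have h3 : exp 3 = exp 1 ^ 3 := by rw [← exp_nat_mul]; norm_num
    have hneg : exp (-3) ≤ 1 := exp_le_one_iff.2 (by norm_num)
    have hcube : exp 1 ^ 3 < 2.72 ^ 3 := by gcongr
    rw [cosh_eq, h3]
    norm_num at hcube ⊢
    linarith
  have hr : 1.09 ≤ (exp 1 ^ 2 + exp 1 + 1) / (exp 1 ^ 2 + exp 1) :=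
    (le_div_iff₀ (by positivity)).2 (by nlinarith)
  have hC : 3.2 ≤ 𝒞 := by
    nlinarith [mul_le_mul hr hr (by norm_num) (by linarith)]
  linarith

lemma two_fifths_le_cosh_sub_cos_div {x y : ℝ} (hy : |y| ≤ π / 2) (hpos : 0 < x ^ 2 + y ^ 2) :
    2 / 5 ≤ (cosh x - cos y) / (x ^ 2 + y ^ 2) := by
  have hx : x ^ 2 / 2 ≤ cosh x - 1 := by
    simpa using sq_sub_sq_div_two_le_cosh_sub_cosh (a := 0) (b := |x|) (by simp)
  rw [le_div_iff₀ hpos]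
  linarith [two_fifths_mul_sq_le_one_sub_cos hy, sq_nonneg x]

lemma cosh_add_one_sub_cos_div_le {x y : ℝ} (hx : 2 ≤ x) (hpos : 0 < x ^ 2 + y ^ 2) :
    (cosh (x + 1) - cos y) / ((x + 1) ^ 2 + y ^ 2)
      ≤ 𝒞 * ((cosh x - cos y) / (x ^ 2 + y ^ 2)) := by
  have hC := one_le_shiftConst
  have hnum : cosh (x + 1) - cos y ≤ 𝒞 * (cosh x - cos y) := by
    nlinarith [cosh_add_one_sub_one_le hx, cos_le_one y]
  rw [← mul_div_assoc]
  exact div_le_div₀ (mul_nonneg (by linarith) (by linarith [one_le_cosh x, cos_le_one y]))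
    hnum hpos (by nlinarith)

theorem g_shift_bound (x y : ℝ) (hy : |y| ≤ π / 2)
    (h0 : (x, y) ≠ (0, 0)) (h1 : (x + 1, y) ≠ (0, 0)) :
    (Real.cosh (x + 1) - Real.cos y) / ((x + 1) ^ 2 + y ^ 2)
      ≤ Real.exp 1 * ((Real.exp 1 ^ 2 + Real.exp 1 + 1) / (Real.exp 1 ^ 2 + Real.exp 1)) ^ 2 *
        ((Real.cosh x - Real.cos y) / (x ^ 2 + y ^ 2)) := by
  have hD₀ := sq_add_sq_pos_of_ne_zero h0
  have hD₁ := sq_add_sq_pos_of_ne_zero h1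
  obtain ⟨hy₁, hy₂⟩ := abs_le.1 hy
  have hcos : 0 ≤ cos y := cos_nonneg_of_neg_pi_div_two_le_of_le hy₁ hy₂
  rcases le_or_gt x (-1) with hx | hx
  · have hG : 0 ≤ (cosh x - cos y) / (x ^ 2 + y ^ 2) :=
      div_nonneg (by linarith [one_le_cosh x, cos_le_one y]) hD₀.le
    calc _ ≤ (cosh x - cos y) / (x ^ 2 + y ^ 2) := by
          simpa only [cosh_neg, neg_sq, neg_neg] using cosh_sub_cos_div_le_of_le
            (a := -(x + 1)) (b := -x) (y := y) (by linarith) (by linarith) (by rwa [neg_sq])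
      _ ≤ _ := le_mul_of_one_le_left hG one_le_shiftConst
  rcases le_or_gt x 2 with hx₂ | hx₂
  · calc _ ≤ (cosh 3 - cos y) / (3 ^ 2 + y ^ 2) :=
          cosh_sub_cos_div_le_of_le (by linarith) (by linarith) hD₁
      _ ≤ cosh 3 / 9 := by
          rw [div_le_div_iff₀ (by positivity) (by norm_num)]
          nlinarith [mul_nonneg (cosh_pos 3).le (sq_nonneg y)]
      _ ≤ 2 / 5 * 𝒞 := cosh_three_div_nine_le
      _ ≤ _ := by
          rw [mul_comm (2 / 5)]
          exact mul_le_mul_of_nonneg_left (two_fifths_le_cosh_sub_cos_div hy hD₀)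
            (zero_le_one.trans one_le_shiftConst)
  · exact cosh_add_one_sub_cos_div_le hx₂.le hD₀
end

section
/- For all real x and all real y with |y| < π/2: |1 + exp(π·sinh(x + iy))| ≥ (1 + exp(π·sinh(x)·cos y))·cos((π/2)·sin y). -/
/-!
Write `w = π sinh (x + iy) = a + ib` with `a = π sinh x cos y`, `b = π cosh x sin y`, and
`θ = (π/2) sin y`. Since `1 + e^w = 2 e^{w/2} cosh (w/2)` and `1 + e^a = 2 e^{a/2} cosh (a/2)`,
and `|cosh (u + iv)|² = cosh² u - sin² v`, the claim reduces to the real inequality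
`|sin (b/2)| ≤ cosh (a/2) |sin θ|`. Writing `b/2 = θ + (cosh x - 1) θ`, the addition formula,
Jordan's inequality `|θ| ≤ (π/2) |sin θ|`, the bound `cos θ ≤ (π/2) cos² y` and
`1 + t²/2 ≤ cosh t` give it.
-/

open Complex Real

namespace Real

theorem one_add_sq_div_two_le_cosh (x : ℝ) : 1 + x ^ 2 / 2 ≤ Real.cosh x := by
  have h := sum_le_hasSum (Finset.range 2)
    (fun i _ => div_nonneg (by rw [pow_mul]; positivity) (by positivity)) (Real.hasSum_cosh x)
  simpa [Finset.sum_range_succ] using h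

theorem abs_sin_add_le (x y : ℝ) : |Real.sin (x + y)| ≤ |Real.sin x| + |y| * |Real.cos x| := by
  have hcos : |Real.sin x| * |Real.cos y| ≤ |Real.sin x| :=
    mul_le_of_le_one_right (abs_nonneg _) (Real.abs_cos_le_one y)
  have hsin : |Real.cos x| * |Real.sin y| ≤ |Real.cos x| * |y| :=
    mul_le_mul_of_nonneg_left Real.abs_sin_le_abs (abs_nonneg _)
  have := abs_add_le (Real.sin x * Real.cos y) (Real.cos x * Real.sin y)
  rw [abs_mul, abs_mul] at this
  rw [Real.sin_add]
  linarith [mul_comm |y| |Real.cos x|]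

theorem abs_pi_div_two_mul_sin_le (y : ℝ) : |π / 2 * Real.sin y| ≤ π / 2 := by
  rw [abs_mul, abs_of_pos (by positivity : 0 < π / 2)]
  exact mul_le_of_le_one_right (by positivity) (Real.abs_sin_le_one y)

theorem cos_pi_div_two_mul_sin_le (y : ℝ) :
    Real.cos (π / 2 * Real.sin y) ≤ π / 2 * Real.cos y ^ 2 := by
  have hs : |Real.sin y| ≤ 1 := Real.abs_sin_le_one y
  calc Real.cos (π / 2 * Real.sin y) = Real.sin (π / 2 - π / 2 * |Real.sin y|) := by
        rw [Real.sin_pi_div_two_sub, ← Real.cos_abs, abs_mul,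
          abs_of_pos (by positivity : 0 < π / 2)]
    _ ≤ π / 2 * (1 - |Real.sin y|) := by
        rw [mul_one_sub]
        exact Real.sin_le (by nlinarith [Real.pi_pos])
    _ ≤ π / 2 * Real.cos y ^ 2 := by
        have : |Real.sin y| ^ 2 ≤ |Real.sin y| := by nlinarith [abs_nonneg (Real.sin y)]
        rw [Real.cos_sq', ← sq_abs]
        gcongr

theorem abs_sin_pi_div_two_mul_cosh_mul_sin_le (x y : ℝ) :
    |Real.sin (π / 2 * Real.cosh x * Real.sin y)|
      ≤ Real.cosh (π / 2 * Real.sinh x * Real.cos y) * |Real.sin (π / 2 * Real.sin y)| := by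
  set θ := π / 2 * Real.sin y
  set A := π / 2 * Real.sinh x * Real.cos y
  set u := Real.cosh x - 1
  have hθ : |θ| ≤ π / 2 := abs_pi_div_two_mul_sin_le y
  have hcosθ : 0 ≤ Real.cos θ := Real.cos_nonneg_of_mem_Icc (abs_le.1 hθ)
  have hjordan : |θ| ≤ π / 2 * |Real.sin θ| := by
    have := Real.mul_abs_le_abs_sin hθ
    rw [div_mul_eq_mul_div, div_le_iff₀ Real.pi_pos] at this
    linarith
  have hu : 0 ≤ u := sub_nonneg.2 (Real.one_le_cosh x)
  have hA : A ^ 2 = π ^ 2 / 4 * (u ^ 2 + 2 * u) * Real.cos y ^ 2 := by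
    linear_combination (-(π ^ 2 / 4 * Real.cos y ^ 2)) * Real.cosh_sq x
  calc |Real.sin (π / 2 * Real.cosh x * Real.sin y)| = |Real.sin (θ + u * θ)| := by
        congr 2; simp only [θ, u]; ring
    _ ≤ |Real.sin θ| + |u * θ| * |Real.cos θ| := abs_sin_add_le θ (u * θ)
    _ ≤ |Real.sin θ| + u * (π / 2 * |Real.sin θ|) * (π / 2 * Real.cos y ^ 2) := by
        rw [abs_mul, abs_of_nonneg hu, abs_of_nonneg hcosθ]
        gcongr
        exact cos_pi_div_two_mul_sin_le y
    _ ≤ (1 + A ^ 2 / 2) * |Real.sin θ| := by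
        rw [hA]
        nlinarith [abs_nonneg (Real.sin θ), Real.pi_pos, mul_nonneg
          (mul_nonneg (sq_nonneg (u * Real.cos y)) (abs_nonneg (Real.sin θ))) (sq_nonneg π)]
    _ ≤ Real.cosh A * |Real.sin θ| := by
        gcongr
        exact one_add_sq_div_two_le_cosh A

end Real

namespace Complex

theorem sinh_add_mul_I (x y : ℂ) : sinh (x + y * I) = sinh x * cos y + cosh x * sin y * I := by
  rw [sinh_add, cosh_mul_I, sinh_mul_I]; ring

theorem one_add_exp_eq (z : ℂ) : 1 + exp z = 2 * exp (z / 2) * cosh (z / 2) := by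
  have hsq : exp z = exp (z / 2) * exp (z / 2) := by rw [← exp_add, add_halves]
  have hinv : exp (z / 2) * exp (-(z / 2)) = 1 := by rw [← exp_add, add_neg_cancel, exp_zero]
  rw [cosh]
  linear_combination hsq - hinv

theorem norm_one_add_exp (z : ℂ) :
    ‖1 + exp z‖ = 2 * Real.exp (z.re / 2) * ‖cosh (z / 2)‖ := by
  rw [one_add_exp_eq, norm_mul, norm_mul, norm_exp, Complex.norm_two, div_ofNat_re]

theorem norm_cosh_sq (z : ℂ) : ‖cosh z‖ ^ 2 = Real.cosh z.re ^ 2 - Real.sin z.im ^ 2 := by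
  conv_lhs => rw [← re_add_im z]
  rw [cosh_add, cosh_mul_I, sinh_mul_I, ← ofReal_sinh, ← ofReal_cos, ← ofReal_cosh,
    ← ofReal_sin, Complex.sq_norm, normSq_apply]
  simp only [add_re, add_im, mul_re, mul_im, ofReal_re, ofReal_im, I_re, I_im]
  nlinarith [Real.cosh_sq z.re, Real.sin_sq_add_cos_sq z.im]

theorem cosh_re_mul_abs_cos_le_norm_cosh {z : ℂ} {t : ℝ}
    (h : |Real.sin z.im| ≤ Real.cosh z.re * |Real.sin t|) :
    Real.cosh z.re * |Real.cos t| ≤ ‖cosh z‖ := by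
  have h2 : Real.sin z.im ^ 2 ≤ Real.cosh z.re ^ 2 * Real.sin t ^ 2 := by
    simpa only [sq_abs, mul_pow] using pow_le_pow_left₀ (abs_nonneg _) h 2
  rw [← pow_le_pow_iff_left₀ (by positivity) (norm_nonneg _) two_ne_zero, mul_pow, sq_abs,
    norm_cosh_sq, Real.cos_sq']
  linarith

end Complex

theorem Real.one_add_exp_eq (x : ℝ) :
    1 + Real.exp x = 2 * Real.exp (x / 2) * Real.cosh (x / 2) := by
  exact_mod_cast congrArg Complex.re (Complex.one_add_exp_eq x)

theorem abs_one_add_exp_pi_sinh_ge_general (x y : ℝ) :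
    ‖1 + Complex.exp (π * Complex.sinh (x + y * Complex.I))‖
      ≥ (1 + Real.exp (π * Real.sinh x * Real.cos y)) * Real.cos (π / 2 * Real.sin y) := by
  set z := (π : ℂ) * Complex.sinh (x + y * Complex.I)
  have hsinh : Complex.sinh (x + y * I)
      = (Real.sinh x * Real.cos y : ℝ) + (Real.cosh x * Real.sin y : ℝ) * I := by
    rw [Complex.sinh_add_mul_I]; push_cast; ring
  have hre : (z / 2).re = π / 2 * Real.sinh x * Real.cos y := by
    simp only [z, hsinh, div_ofNat_re, mul_re, add_re, add_im, mul_im, ofReal_re, ofReal_im,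
      I_re, I_im]
    ring
  have him : (z / 2).im = π / 2 * Real.cosh x * Real.sin y := by
    simp only [z, hsinh, div_ofNat_im, mul_re, add_re, add_im, mul_im, ofReal_re, ofReal_im,
      I_re, I_im]
    ring
  have hcos : 0 ≤ Real.cos (π / 2 * Real.sin y) :=
    Real.cos_nonneg_of_mem_Icc (abs_le.1 (Real.abs_pi_div_two_mul_sin_le y))
  calc (1 + Real.exp (π * Real.sinh x * Real.cos y)) * Real.cos (π / 2 * Real.sin y)
      = 2 * Real.exp (z.re / 2) * (Real.cosh (z / 2).re * |Real.cos (π / 2 * Real.sin y)|) := by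
        rw [Real.one_add_exp_eq, ← div_ofNat_re, hre, abs_of_nonneg hcos]; ring_nf
    _ ≤ 2 * Real.exp (z.re / 2) * ‖Complex.cosh (z / 2)‖ := by
        gcongr
        apply Complex.cosh_re_mul_abs_cos_le_norm_cosh
        rw [hre, him]
        exact Real.abs_sin_pi_div_two_mul_cosh_mul_sin_le x y
    _ = ‖1 + Complex.exp z‖ := (Complex.norm_one_add_exp z).symm

theorem abs_one_add_exp_pi_sinh_ge (x y : ℝ) (hy : |y| < π / 2) :
    ‖1 + Complex.exp (π * Complex.sinh (x + y * Complex.I))‖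
      ≥ (1 + Real.exp (π * Real.sinh x * Real.cos y)) * Real.cos (π / 2 * Real.sin y) :=
  abs_one_add_exp_pi_sinh_ge_general x y
end

section
/- Let P(x,y) = sin²((π/2)·cosh(x)·sin y) / cosh²((π/2)·sinh(x)·cos y) for real x and y with |y| < π/2. Then P(x,y) ≤ P(0,y) = sin²((π/2)·sin y) for all real x. -/
/-!
Write `t = (π / 2) sin y` and `a = (π / 2) cos y`, so that `t² + a² = (π / 2)²`; by symmetry
the claim is `|sin (t cosh x)| ≤ sin t · cosh (a sinh x)` for `t, x ≥ 0`. As long as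
`t cosh x ≤ π / 2`, the difference of the two sides is nondecreasing in `x`: its derivative
`a sin t · sinh (a sinh x) cosh x - t cos (t cosh x) sinh x` is nonnegative, because
`cos (t cosh x) ≤ cos t`, `t cos t ≤ a² sin t` (from `cos t ≤ π / 2 - t` and Jordan's
`sin t ≥ 2t / π`) and `a sinh x ≤ sinh (a sinh x)`. Once `t cosh x` reaches `π / 2` the right
side is at least `1`.
-/

open Real

lemma mul_cos_le_sin_mul_sq_sub_sq {t : ℝ} (ht : 0 ≤ t) (ht' : t ≤ π / 2) :
    t * cos t ≤ sin t * ((π / 2) ^ 2 - t ^ 2) := by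
  have hcos : cos t ≤ π / 2 - t := by
    rw [← sin_pi_div_two_sub]; exact sin_le (by linarith)
  have hsin : 2 / π * t ≤ sin t := mul_le_sin ht ht'
  calc t * cos t ≤ t * (π / 2 - t) := mul_le_mul_of_nonneg_left hcos ht
    _ = 2 / π * t * (π / 2) * (π / 2 - t) := by field_simp
    _ ≤ 2 / π * t * (π / 2 + t) * (π / 2 - t) := by gcongr; linarith
    _ ≤ sin t * (π / 2 + t) * (π / 2 - t) := by gcongr
    _ = sin t * ((π / 2) ^ 2 - t ^ 2) := by ring

section

variable {t a : ℝ}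

lemma abs_le_pi_div_two_of_sq_add_sq_eq (hta : t ^ 2 + a ^ 2 = (π / 2) ^ 2) : |t| ≤ π / 2 :=
  abs_le_of_sq_le_sq (by nlinarith [sq_nonneg a]) (by positivity)

lemma cos_mul_cosh_mul_le_sin_mul_sinh_mul (ht : 0 ≤ t) (ha : 0 ≤ a)
    (hta : t ^ 2 + a ^ 2 = (π / 2) ^ 2) {w : ℝ} (hw : 0 ≤ w) (htw : t * cosh w ≤ π) :
    cos (t * cosh w) * (t * sinh w) ≤ sin t * (sinh (a * sinh w) * (a * cosh w)) := by
  have hsinh : 0 ≤ sinh w := sinh_nonneg_iff.2 hw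
  have ht' : t ≤ π / 2 := (le_abs_self t).trans (abs_le_pi_div_two_of_sq_add_sq_eq hta)
  have hsin : 0 ≤ sin t := sin_nonneg_of_nonneg_of_le_pi ht (by linarith)
  have hcos : cos (t * cosh w) ≤ cos t :=
    cos_le_cos_of_nonneg_of_le_pi ht htw (le_mul_of_one_le_right ht (one_le_cosh w))
  have hself : a * sinh w ≤ sinh (a * sinh w) := self_le_sinh_iff.2 (by positivity)
  calc cos (t * cosh w) * (t * sinh w) ≤ t * cos t * sinh w := by
        nlinarith [mul_nonneg ht hsinh]
    _ ≤ sin t * ((π / 2) ^ 2 - t ^ 2) * sinh w :=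
        mul_le_mul_of_nonneg_right (mul_cos_le_sin_mul_sq_sub_sq ht ht') hsinh
    _ = sin t * ((a * sinh w) * a) := by rw [← hta]; ring
    _ ≤ sin t * (sinh (a * sinh w) * (a * cosh w)) := by
        gcongr; exact le_mul_of_one_le_right ha (one_le_cosh w)

lemma sin_mul_cosh_le_sin_mul_cosh_mul_sinh (ht : 0 ≤ t) (ha : 0 ≤ a)
    (hta : t ^ 2 + a ^ 2 = (π / 2) ^ 2) {x : ℝ} (hx : 0 ≤ x) (htx : t * cosh x ≤ π / 2) :
    sin (t * cosh x) ≤ sin t * cosh (a * sinh x) := by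
  let φ : ℝ → ℝ := fun w ↦ sin t * cosh (a * sinh w) - sin (t * cosh w)
  have hφ : ∀ w, HasDerivAt φ (sin t * (sinh (a * sinh w) * (a * cosh w)) -
      cos (t * cosh w) * (t * sinh w)) w := fun w ↦
    ((((hasDerivAt_sinh w).const_mul a).cosh).const_mul _).sub
      (((hasDerivAt_cosh w).const_mul t).sin)
  have hmono : MonotoneOn φ (Set.Icc 0 x) := by
    refine monotoneOn_of_hasDerivWithinAt_nonneg (convex_Icc 0 x)
      (fun w _ ↦ (hφ w).continuousAt.continuousWithinAt)
      (fun w _ ↦ (hφ w).hasDerivWithinAt) fun w hw ↦ ?_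
    rw [interior_Icc] at hw
    have hcosh : cosh w ≤ cosh x := by
      rw [cosh_le_cosh, abs_of_pos hw.1, abs_of_nonneg hx]; exact hw.2.le
    refine sub_nonneg.2 (cos_mul_cosh_mul_le_sin_mul_sinh_mul ht ha hta hw.1.le ?_)
    nlinarith [pi_pos]
  have := hmono (Set.left_mem_Icc.2 hx) (Set.right_mem_Icc.2 hx) hx
  simp only [φ, sinh_zero, mul_zero, cosh_zero, mul_one, sub_self] at this
  linarith

lemma abs_sin_mul_cosh_le_sin_mul_cosh_mul_sinh (ht : 0 ≤ t) (ha : 0 ≤ a)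
    (hta : t ^ 2 + a ^ 2 = (π / 2) ^ 2) {x : ℝ} (hx : 0 ≤ x) :
    |sin (t * cosh x)| ≤ sin t * cosh (a * sinh x) := by
  rcases le_or_gt (t * cosh x) (π / 2) with htx | htx
  · rw [abs_of_nonneg (sin_nonneg_of_nonneg_of_le_pi (by positivity) (by linarith [pi_pos]))]
    exact sin_mul_cosh_le_sin_mul_cosh_mul_sinh ht ha hta hx htx
  -- Otherwise compare with the point `x₀ ≤ x` where `t * cosh x₀ = π / 2` and the sine is `1`.
  have ht' : t ≤ π / 2 := (le_abs_self t).trans (abs_le_pi_div_two_of_sq_add_sq_eq hta)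
  obtain ⟨x₀, ⟨hx₀, hx₀x⟩, htx₀⟩ : ∃ x₀ ∈ Set.Icc 0 x, t * cosh x₀ = π / 2 :=
    intermediate_value_Icc hx (by fun_prop) ⟨by simpa using ht', htx.le⟩
  calc |sin (t * cosh x)| ≤ 1 := abs_sin_le_one _
    _ = sin (t * cosh x₀) := by rw [htx₀, sin_pi_div_two]
    _ ≤ sin t * cosh (a * sinh x₀) :=
        sin_mul_cosh_le_sin_mul_cosh_mul_sinh ht ha hta hx₀ htx₀.le
    _ ≤ sin t * cosh (a * sinh x) := by
        gcongr
        · exact sin_nonneg_of_nonneg_of_le_pi ht (by linarith [pi_pos])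
        · rw [cosh_le_cosh, abs_of_nonneg (by positivity), abs_of_nonneg (by positivity)]
          gcongr; exact sinh_le_sinh.2 hx₀x

lemma abs_sin_mul_cosh_le_abs_sin_mul_cosh_mul_sinh (ha : 0 ≤ a)
    (hta : t ^ 2 + a ^ 2 = (π / 2) ^ 2) (x : ℝ) :
    |sin (t * cosh x)| ≤ |sin t| * cosh (a * sinh x) := by
  have key := abs_sin_mul_cosh_le_sin_mul_cosh_mul_sinh (abs_nonneg t) ha (by rwa [sq_abs])
    (abs_nonneg x)
  have ht : |t| ≤ π := (abs_le_pi_div_two_of_sq_add_sq_eq hta).trans (by linarith [pi_pos])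
  have hsin : sin |t| = |sin t| := by
    rcases le_total 0 t with h | h
    · rw [abs_of_nonneg h, abs_of_nonneg (sin_nonneg_of_nonneg_of_le_pi h (abs_le.1 ht).2)]
    · rw [abs_of_nonpos h, sin_neg,
        abs_of_nonpos (sin_nonpos_of_nonpos_of_neg_pi_le h (abs_le.1 ht).1)]
  have hlhs : |sin (|t| * cosh |x|)| = |sin (t * cosh x)| := by
    rw [cosh_abs]; rcases abs_choice t with h | h <;> simp [h]
  have hrhs : cosh (a * sinh |x|) = cosh (a * sinh x) := by
    rcases abs_choice x with h | h <;> simp [h]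
  rwa [hlhs, hsin, hrhs] at key

end

theorem P_le_P_zero (x y : ℝ) (hy : |y| < π / 2) :
    Real.sin (π / 2 * Real.cosh x * Real.sin y) ^ 2 /
        Real.cosh (π / 2 * Real.sinh x * Real.cos y) ^ 2
      ≤ Real.sin (π / 2 * Real.sin y) ^ 2 := by
  have hcos : 0 ≤ cos y := (cos_pos_of_mem_Ioo (abs_lt.1 hy)).le
  have key := abs_sin_mul_cosh_le_abs_sin_mul_cosh_mul_sinh (t := π / 2 * sin y)
    (a := π / 2 * cos y) (by positivity)
    (by linear_combination (π / 2) ^ 2 * sin_sq_add_cos_sq y) x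
  rw [div_le_iff₀ (by positivity)]
  calc sin (π / 2 * cosh x * sin y) ^ 2 = |sin (π / 2 * sin y * cosh x)| ^ 2 := by
        rw [sq_abs, mul_right_comm]
    _ ≤ (|sin (π / 2 * sin y)| * cosh (π / 2 * cos y * sinh x)) ^ 2 := by gcongr
    _ = sin (π / 2 * sin y) ^ 2 * cosh (π / 2 * sinh x * cos y) ^ 2 := by
        rw [mul_pow, sq_abs, mul_right_comm]
end

section
/- Let L > 0 and d_L = arccos(√(2/(1 + √(1 + (2π/L)²)))). For 0 ≤ y ≤ d_L set x₀ = arsinh(L/(π·cos y)) and x₁ = log((1 + cos y)/sin y) (for 0 < y). Then cosh(x₁ − x₀) = (1/sin y)·(√(1 + (L/(π cos y))²) − L/π), and this quantity is monotonically decreasing in y on (0, d_L]. -/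
open Real Set

/-!
With `c = cos y`, `s = sin y` and `t = L / (π c)` we have `e^{x₁} = (1 + c) / s` and
`e^{-x₀} = √(1 + t²) - t`; since `(1 + c)(1 - c) = s²`, the two halves of `cosh (x₁ - x₀)` add up
to `(√(1 + t²) - t c) / s`, and `t c = L / π`.

For monotonicity put `a = L / π`. The derivative of `(√(1 + (a / c)²) - a) / s` has the sign of
`a c⁴ √(1 + (a / c)²) - (c⁴ + a² (2c² - 1))`, which is `≤ 0` whenever `a s ≤ c²`: then
`P = c⁴ - a² s²` is nonnegative, the second term equals `P + a² c²`, and the squares differ by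
`P (P + a² c² (2 - c²))`. The condition `a s ≤ c²` holds up to the angle `d_L` where
`cos² d_L = a sin d_L`, and persists below it because `sin` increases and `cos` decreases.
-/

theorem cosh_log_sub_arsinh {A : ℝ} (hA : 0 < A) (t : ℝ) :
    cosh (log A - arsinh t) = (A * (√(1 + t ^ 2) - t) + (√(1 + t ^ 2) + t) / A) / 2 := by
  have hS : √(1 + t ^ 2) ^ 2 = 1 + t ^ 2 := sq_sqrt (by positivity)
  have hpos : 0 < t + √(1 + t ^ 2) := by rw [← exp_arsinh]; positivity
  rw [cosh_eq, exp_sub, neg_sub, exp_sub, exp_log hA, exp_arsinh]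
  field_simp
  linear_combination (-A ^ 2) * hS

theorem cosh_log_cot_half_sub_arsinh {y : ℝ} (hs : 0 < sin y) (t : ℝ) :
    cosh (log ((1 + cos y) / sin y) - arsinh t) = (√(1 + t ^ 2) - t * cos y) / sin y := by
  have hsc := sin_sq_add_cos_sq y
  have hc : 0 < 1 + cos y := by nlinarith [neg_one_le_cos y]
  rw [cosh_log_sub_arsinh (div_pos hc hs)]
  field_simp
  linear_combination (√(1 + t ^ 2) + t) * hsc

theorem cosh_log_cot_half_sub_arsinh_div_cos (a : ℝ) {y : ℝ} (hs : 0 < sin y) (hc : cos y ≠ 0) :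
    cosh (log ((1 + cos y) / sin y) - arsinh (a / cos y))
      = (√(1 + (a / cos y) ^ 2) - a) / sin y := by
  rw [cosh_log_cot_half_sub_arsinh hs, div_mul_cancel₀ a hc]

theorem sin_pos_and_cos_pos_of_mem_Ioo {y : ℝ} (hy : y ∈ Ioo 0 (π / 2)) :
    0 < sin y ∧ 0 < cos y :=
  ⟨sin_pos_of_pos_of_lt_pi hy.1 (hy.2.trans (half_lt_self pi_pos)),
    cos_pos_of_mem_Ioo ⟨(neg_neg_of_pos (half_pos pi_pos)).trans hy.1, hy.2⟩⟩

theorem hasDerivAt_sqrt_one_add_div_cos_sq_sub_div_sin (a : ℝ) {x : ℝ} (hs : sin x ≠ 0)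
    (hc : cos x ≠ 0) :
    HasDerivAt (fun y => (√(1 + (a / cos y) ^ 2) - a) / sin y)
      ((a * cos x ^ 4 * √(1 + (a / cos x) ^ 2) - (cos x ^ 4 + a ^ 2 * (2 * cos x ^ 2 - 1)))
        / (cos x ^ 3 * sin x ^ 2 * √(1 + (a / cos x) ^ 2))) x := by
  have hS : 0 < √(1 + (a / cos x) ^ 2) := sqrt_pos.2 (by positivity)
  have hS2 : √(1 + (a / cos x) ^ 2) ^ 2 = 1 + (a / cos x) ^ 2 := sq_sqrt (by positivity)
  have h := ((((hasDerivAt_const x a).fun_div (hasDerivAt_cos x) hc).fun_pow 2).const_add 1).sqrt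
    (by positivity) |>.sub_const a |>.fun_div (hasDerivAt_sin x) hs
  refine h.congr_deriv ?_
  have hS2' : cos x ^ 2 * √(1 + (a / cos x) ^ 2) ^ 2 = cos x ^ 2 + a ^ 2 := by
    rw [hS2]; field_simp
  generalize √(1 + (a / cos x) ^ 2) = S at hS hS2' ⊢
  norm_num
  field_simp
  linear_combination (-cos x ^ 2) * hS2' + a ^ 2 * sin_sq_add_cos_sq x

theorem mul_sqrt_one_add_div_sq_le {a c : ℝ} (hc : 0 < c) (hc1 : c ≤ 1)
    (h : a ^ 2 * (1 - c ^ 2) ≤ c ^ 4) :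
    a * c ^ 4 * √(1 + (a / c) ^ 2) ≤ c ^ 4 + a ^ 2 * (2 * c ^ 2 - 1) := by
  have hS2 : √(1 + (a / c) ^ 2) ^ 2 = 1 + (a / c) ^ 2 := sq_sqrt (by positivity)
  set P := c ^ 4 - a ^ 2 * (1 - c ^ 2)
  have hP : 0 ≤ P := sub_nonneg.2 h
  have hlhs : (a * c ^ 4 * √(1 + (a / c) ^ 2)) ^ 2 = a ^ 2 * c ^ 8 + a ^ 4 * c ^ 6 := by
    rw [mul_pow, hS2]; field_simp
  have hrhs : c ^ 4 + a ^ 2 * (2 * c ^ 2 - 1) = P + a ^ 2 * c ^ 2 := by ring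
  rw [hrhs]
  refine (le_abs_self _).trans (abs_le_of_sq_le_sq ?_ (by positivity))
  have hP' : 0 ≤ P * (P + a ^ 2 * c ^ 2 * (2 - c ^ 2)) := by
    have : c ^ 2 ≤ 1 := pow_le_one₀ hc.le hc1
    exact mul_nonneg hP (add_nonneg hP (mul_nonneg (by positivity) (by linarith)))
  nlinarith

theorem antitoneOn_sqrt_one_add_div_cos_sq_sub_div_sin {a d : ℝ} (hd : d < π / 2)
    (had : |a| * sin d ≤ cos d ^ 2) :
    AntitoneOn (fun y => (√(1 + (a / cos y) ^ 2) - a) / sin y) (Ioc 0 d) := by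
  have hsc := fun y (hy : y ∈ Ioc 0 d) =>
    sin_pos_and_cos_pos_of_mem_Ioo (Ioc_subset_Ioo_right hd hy)
  have hderiv := fun y (hy : y ∈ Ioc 0 d) =>
    hasDerivAt_sqrt_one_add_div_cos_sq_sub_div_sin a (hsc y hy).1.ne' (hsc y hy).2.ne'
  refine antitoneOn_of_hasDerivWithinAt_nonpos (convex_Ioc 0 d)
    (continuousOn_of_forall_continuousAt fun y hy => (hderiv y hy).continuousAt)
    (fun y hy => (hderiv y (interior_subset hy)).hasDerivWithinAt) fun y hy => ?_
  rw [interior_Ioc] at hy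
  obtain ⟨hs, hc⟩ := hsc y (Ioo_subset_Ioc_self hy)
  have hy_le : |a| * sin y ≤ cos y ^ 2 := calc
    |a| * sin y ≤ |a| * sin d := by
      gcongr; exact sin_le_sin_of_le_of_le_pi_div_two (by linarith [hy.1, pi_pos]) hd.le hy.2.le
    _ ≤ cos d ^ 2 := had
    _ ≤ cos y ^ 2 := by
      gcongr
      · exact cos_nonneg_of_mem_Icc ⟨by linarith [hy.1, hy.2, pi_pos], hd.le⟩
      · exact cos_le_cos_of_nonneg_of_le_pi hy.1.le (by linarith [pi_pos]) hy.2.le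
  have hsq : a ^ 2 * (1 - cos y ^ 2) ≤ cos y ^ 4 := by
    rw [← sin_sq, ← sq_abs a, ← mul_pow, show cos y ^ 4 = (cos y ^ 2) ^ 2 by ring]
    exact pow_le_pow_left₀ (by positivity) hy_le 2
  have hnum := mul_sqrt_one_add_div_sq_le hc (cos_le_one y) hsq
  exact div_nonpos_of_nonpos_of_nonneg (by linarith) (by positivity)

-- The paper's `d_L` is `criticalAngle (L / π)`.
noncomputable def criticalAngle (a : ℝ) : ℝ := arccos √(2 / (1 + √(1 + (2 / a) ^ 2)))

theorem criticalAngle_lt_pi_div_two (a : ℝ) : criticalAngle a < π / 2 :=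
  arccos_lt_pi_div_two.2 (sqrt_pos.2 (by positivity))

theorem cos_criticalAngle_sq {a : ℝ} (ha : 0 < a) :
    cos (criticalAngle a) ^ 2 = a * sin (criticalAngle a) := by
  set r := √(1 + (2 / a) ^ 2)
  have hr2 : r ^ 2 = 1 + (2 / a) ^ 2 := sq_sqrt (by positivity)
  have hr1 : 1 ≤ r := one_le_sqrt.2 (by nlinarith)
  have hθ2 : √(2 / (1 + r)) ^ 2 = 2 / (1 + r) := sq_sqrt (by positivity)
  have hθ1 : √(2 / (1 + r)) ≤ 1 := sqrt_le_one.2 ((div_le_one (by linarith)).2 (by linarith))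
  have hθ2c : 0 ≤ 1 - 2 / (1 + r) := by rw [← hθ2]; nlinarith [sqrt_nonneg (2 / (1 + r))]
  rw [criticalAngle, sin_arccos, cos_arccos (by linarith [sqrt_nonneg (2 / (1 + r))]) hθ1, hθ2,
    ← sq_eq_sq₀ (by positivity) (by positivity), mul_pow, sq_sqrt hθ2c]
  have hr2' : a ^ 2 * r ^ 2 = a ^ 2 + 4 := by rw [hr2]; field_simp; ring
  field_simp
  linear_combination -hr2'

theorem cosh_x1_sub_x0_eq_and_antitone (L : ℝ) (hL : 0 < L) :
    (∀ y ∈ Ioc 0 (Real.arccos (Real.sqrt (2 / (1 + Real.sqrt (1 + (2 * π / L) ^ 2))))),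
      Real.cosh (Real.log ((1 + Real.cos y) / Real.sin y)
          - Real.arsinh (L / (π * Real.cos y)))
        = (1 / Real.sin y) * (Real.sqrt (1 + (L / (π * Real.cos y)) ^ 2) - L / π)) ∧
    AntitoneOn (fun y : ℝ =>
        Real.cosh (Real.log ((1 + Real.cos y) / Real.sin y)
          - Real.arsinh (L / (π * Real.cos y))))
      (Ioc 0 (Real.arccos (Real.sqrt (2 / (1 + Real.sqrt (1 + (2 * π / L) ^ 2)))))) := by
  have ha : 0 < L / π := div_pos hL pi_pos
  have hd : arccos √(2 / (1 + √(1 + (2 * π / L) ^ 2))) = criticalAngle (L / π) := by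
    rw [criticalAngle, div_div_eq_mul_div]
  have hcosh : ∀ y ∈ Ioc 0 (criticalAngle (L / π)),
      cosh (log ((1 + cos y) / sin y) - arsinh (L / (π * cos y)))
        = (√(1 + (L / π / cos y) ^ 2) - L / π) / sin y := fun y hy => by
    obtain ⟨hs, hc⟩ := sin_pos_and_cos_pos_of_mem_Ioo
      (Ioc_subset_Ioo_right (criticalAngle_lt_pi_div_two _) hy)
    rw [div_mul_eq_div_div L π]
    exact cosh_log_cot_half_sub_arsinh_div_cos _ hs hc.ne'
  rw [hd]
  refine ⟨fun y hy => by rw [hcosh y hy, div_mul_eq_div_div L π, one_div_mul_eq_div], ?_⟩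
  refine (antitoneOn_sqrt_one_add_div_cos_sq_sub_div_sin (criticalAngle_lt_pi_div_two _)
    ?_).congr fun y hy => (hcosh y hy).symm
  rw [abs_of_pos ha, cos_criticalAngle_sq ha]
end

section
/- For every L > 0, with d_L = arccos(√(2/(1 + √(1 + (2π/L)²)))), the inequality π²·cos⁴(y) + L²·(2·cos²(y) − 1) ≥ 0 holds for all y with 0 ≤ y ≤ d_L. -/
/-!
Write `R = √(1 + (2π/L)²)` and `c = cos² y`. Since `cos` is decreasing on `[0, π]`, the bound on `y`
gives `c ≥ 2 / (1 + R)`. The left-hand side `π² c² + L² (2c - 1)` is increasing in `c ≥ 0`, and at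
`c = 2 / (1 + R)` it equals `2 L² / (1 + R) > 0`, because `L² (R² - 1) = 4π²`.
-/

open Real

theorem le_cos_of_le_arccos {s y : ℝ} (hs₁ : -1 ≤ s) (hs₂ : s ≤ 1) (hy₀ : 0 ≤ y)
    (hy : y ≤ arccos s) : s ≤ cos y := by
  simpa [cos_arccos hs₁ hs₂] using cos_le_cos_of_nonneg_of_le_pi hy₀ (arccos_le_pi s) hy

theorem le_cos_sq_of_le_arccos_sqrt {q y : ℝ} (hq₀ : 0 ≤ q) (hq₁ : q ≤ 1) (hy₀ : 0 ≤ y)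
    (hy : y ≤ arccos (√q)) : q ≤ cos y ^ 2 := by
  have hs : √q ≤ cos y :=
    le_cos_of_le_arccos (by linarith [sqrt_nonneg q]) (sqrt_le_one.mpr hq₁) hy₀ hy
  calc q = √q ^ 2 := (sq_sqrt hq₀).symm
    _ ≤ cos y ^ 2 := by gcongr

theorem two_div_one_add_le_one {R : ℝ} (hR : 1 ≤ R) : 2 / (1 + R) ≤ 1 := by
  rw [div_le_one (by linarith)]
  linarith

theorem sq_mul_two_div_sq_add_sq_mul_eq {a L R : ℝ} (hL : L ≠ 0) (hR₀ : 0 ≤ R)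
    (hR : R ^ 2 = 1 + (2 * a / L) ^ 2) :
    a ^ 2 * (2 / (1 + R)) ^ 2 + L ^ 2 * (2 * (2 / (1 + R)) - 1) = 2 * L ^ 2 / (1 + R) := by
  have ha : 4 * a ^ 2 = L ^ 2 * (R ^ 2 - 1) := by
    rw [hR]
    field_simp
    ring
  have hR₁ : 1 + R ≠ 0 := by positivity
  field_simp
  linear_combination ha

theorem cos_pow_ineq (L y : ℝ) (hL : 0 < L) (hy0 : 0 ≤ y)
    (hy : y ≤ Real.arccos (Real.sqrt (2 / (1 + Real.sqrt (1 + (2 * π / L) ^ 2))))) :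
    π ^ 2 * Real.cos y ^ 4 + L ^ 2 * (2 * Real.cos y ^ 2 - 1) ≥ 0 := by
  set R := √(1 + (2 * π / L) ^ 2)
  have hR : 1 ≤ R := one_le_sqrt.mpr (le_add_of_nonneg_right (sq_nonneg _))
  have hc : 2 / (1 + R) ≤ cos y ^ 2 :=
    le_cos_sq_of_le_arccos_sqrt (by positivity) (two_div_one_add_le_one hR) hy0 hy
  calc π ^ 2 * cos y ^ 4 + L ^ 2 * (2 * cos y ^ 2 - 1)
      = π ^ 2 * (cos y ^ 2) ^ 2 + L ^ 2 * (2 * cos y ^ 2 - 1) := by ring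
    _ ≥ π ^ 2 * (2 / (1 + R)) ^ 2 + L ^ 2 * (2 * (2 / (1 + R)) - 1) := by gcongr
    _ = 2 * L ^ 2 / (1 + R) :=
      sq_mul_two_div_sq_add_sq_mul_eq hL.ne' (by positivity) (sq_sqrt (by positivity))
    _ ≥ 0 := by positivity
end

section
/- Let γ = (π² − 4)/(2π). For all v ≥ √(π² − 4)/2 with v < π/2, one has tan(v)/v ≥ v²/((π/2)²·(v² − γ²)); equivalently Φ(v) := tan(v) − v³/((π/2)²·(v² − γ²)) > 0. -/
open Real

theorem tan_div_ge (v : ℝ) (hv1 : Real.sqrt (π ^ 2 - 4) / 2 ≤ v) (hv2 : v < π / 2) :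
    Real.tan v / v ≥ v ^ 2 / ((π / 2) ^ 2 * (v ^ 2 - ((π ^ 2 - 4) / (2 * π)) ^ 2)) ∧
    Real.tan v - v ^ 3 / ((π / 2) ^ 2 * (v ^ 2 - ((π ^ 2 - 4) / (2 * π)) ^ 2)) > 0 := by
  have hπ : 0 < π := pi_pos
  have h4 : 0 < π ^ 2 - 4 := by nlinarith [pi_gt_three]
  have hsq : Real.sqrt (π ^ 2 - 4) ^ 2 = π ^ 2 - 4 := Real.sq_sqrt h4.le
  have hsp : 0 < Real.sqrt (π ^ 2 - 4) := Real.sqrt_pos.mpr h4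
  have hv0 : 0 < v := lt_of_lt_of_le (by linarith) hv1
  have hvsq : (π ^ 2 - 4) / 4 ≤ v ^ 2 := by
    nlinarith [mul_self_le_mul_self (by linarith : (0:ℝ) ≤ Real.sqrt (π ^ 2 - 4) / 2) hv1]
  have key : (π / 2) ^ 2 * (v ^ 2 - ((π ^ 2 - 4) / (2 * π)) ^ 2) - v ^ 2
      = (π ^ 2 - 4) / 4 * (v ^ 2 - (π ^ 2 - 4) / 4) := by
    field_simp
    ring
  have hD : v ^ 2 ≤ (π / 2) ^ 2 * (v ^ 2 - ((π ^ 2 - 4) / (2 * π)) ^ 2) := by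
    nlinarith [key, mul_nonneg (by linarith : (0:ℝ) ≤ (π ^ 2 - 4) / 4)
      (by linarith : (0:ℝ) ≤ v ^ 2 - (π ^ 2 - 4) / 4)]
  set D := (π / 2) ^ 2 * (v ^ 2 - ((π ^ 2 - 4) / (2 * π)) ^ 2) with hDdef
  have hDpos : 0 < D := lt_of_lt_of_le (by positivity) hD
  have htan : v < Real.tan v := Real.lt_tan hv0 hv2
  constructor
  · rw [ge_iff_le, div_le_div_iff₀ hDpos hv0]
    nlinarith
  · have h1 : v ^ 3 / D ≤ v := by
      rw [div_le_iff₀ hDpos]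
      nlinarith
    linarith
end
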